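/- arXiv:2305.03290 — 8 statements merged into one kernel-verified Lean document; each statement's English description precedes it below -/
import Mathlib

section
/- Let g ≥ 4 be an even integer and let G be a finite 3-regular simple graph of girth g on n vertices that contains two vertices at distance at least g/2. Then for every integer k ≥ 1, setting m = 3k, there exists a finite simple graph H of girth exactly g and order k(n−2)+2 which has two vertices of degree m while each of its remaining k(n−2) vertices has degree 3. -/
/-!
Take two vertices `u`, `v` of `G` with `dist u v ≥ g / 2` (so `u ≠ v` and they are not adjacent)
and glue `k` copies of `G` along `{u, v}`. Every vertex of a copy keeps its three neighbours, and
each of the two hubs `u`, `v` has three neighbours in every copy. Each copy is a copy of `G`, so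
the girth is at most `g`. Conversely, folding the copies back onto `G` is a homomorphism. A cycle
through both hubs folds to two `u`–`v` walks, so it has length at least `2 dist u v ≥ g`. A cycle
meeting at most one hub stays inside one copy, because leaving a copy and coming back needs two
different hubs. The folding is injective on that copy, so the cycle folds to a cycle of `G` of
the same length.
-/

namespace SimpleGraph

section

variable {V W : Type*} {G : SimpleGraph V} {G' : SimpleGraph W} {z a b : V}

theorem Walk.IsCycle.map_of_injOn {f : G →g G'} {C : G.Walk z z} (hC : C.IsCycle)
    (hf : Set.InjOn f {x | x ∈ C.support}) : (C.map f).IsCycle := by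
  rw [Walk.isCycle_def, Walk.isTrail_def, Walk.edges_map, Walk.support_map, ← List.map_tail]
  refine ⟨hC.edges_nodup.map_on ?_, fun h => hC.not_nil ((Walk.nil_map_iff f).1 (h ▸ .nil)),
    hC.support_nodup.map_on fun x hx y hy =>
      hf (List.mem_of_mem_tail hx) (List.mem_of_mem_tail hy)⟩
  intro e he e' he' hee'
  induction e using Sym2.ind with | _ x y => ?_
  induction e' using Sym2.ind with | _ x' y' => ?_
  have hx := C.fst_mem_support_of_mem_edges he
  have hy := C.snd_mem_support_of_mem_edges he
  have hx' := C.fst_mem_support_of_mem_edges he'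
  have hy' := C.snd_mem_support_of_mem_edges he'
  simp only [Sym2.map_mk, Sym2.eq_iff] at hee' ⊢
  rcases hee' with ⟨h₁, h₂⟩ | ⟨h₁, h₂⟩
  · exact .inl ⟨hf hx hx' h₁, hf hy hy' h₂⟩
  · exact .inr ⟨hf hx hy' h₁, hf hy hx' h₂⟩

theorem Walk.IsCycle.exists_walks_of_mem_support [DecidableEq V] {C : G.Walk z z}
    (hC : C.IsCycle) (ha : a ∈ C.support) (hb : b ∈ C.support) :
    ∃ (p : G.Walk a b) (q : G.Walk b a), p.length + q.length = C.length ∧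
      p.support.tail.Disjoint q.support.tail ∧ p.support ⊆ C.support ∧ q.support ⊆ C.support := by
  set C' := C.rotate a ha
  have hb' : b ∈ C'.support := (C.mem_support_rotate_iff a ha).2 hb
  have hsplit := C'.take_spec hb'
  refine ⟨C'.takeUntil b hb', C'.dropUntil b hb', ?_, ?_, ?_, ?_⟩
  · rw [← Walk.length_append, hsplit, Walk.length_rotate]
  · apply List.disjoint_of_nodup_append
    rw [← Walk.tail_support_append, hsplit]
    exact (hC.rotate ha).support_nodup
  · exact fun x hx =>
      (C.mem_support_rotate_iff a ha).1 (C'.support_takeUntil_subset_support hb' hx)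
  · exact fun x hx =>
      (C.mem_support_rotate_iff a ha).1 (C'.support_dropUntil_subset_support hb' hx)

theorem Iso.ncard_neighborSet_eq (e : G ≃g G') (x : V) :
    (G'.neighborSet (e x)).ncard = (G.neighborSet x).ncard := by
  rw [← Nat.card_coe_set_eq, ← Nat.card_coe_set_eq, Nat.card_congr (e.mapNeighborSet x)]

end

section GluedCopies

variable {V : Type*} (G : SimpleGraph V) (S : Set V) (k : ℕ)

/-- `k` copies of `G` sharing the vertices of `S`: `.inl (i, x)` is the `i`-th copy of `x ∉ S`. -/
def gluedCopies : SimpleGraph ((Fin k × ↥Sᶜ) ⊕ S) where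
  Adj
    | .inl p, .inl q => p.1 = q.1 ∧ G.Adj p.2 q.2
    | .inl p, .inr s => G.Adj p.2 s
    | .inr s, .inl q => G.Adj s q.2
    | .inr s, .inr t => G.Adj s t
  symm := ⟨by
    rintro (p | s) (q | t) h
    exacts [⟨h.1.symm, h.2.symm⟩, h.symm, h.symm, h.symm]⟩
  loopless := ⟨by
    rintro (p | s) h
    exacts [G.irrefl h.2, G.irrefl h]⟩

namespace gluedCopies

def foldHom : gluedCopies G S k →g G where
  toFun := Sum.elim (fun p => p.2) Subtype.val
  map_rel' := by
    rintro (p | s) (q | t) h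
    exacts [h.2, h, h, h]

def copyHom [DecidablePred (· ∈ S)] (i : Fin k) : G →g gluedCopies G S k where
  toFun x := if hx : x ∈ S then .inr ⟨x, hx⟩ else .inl (i, ⟨x, hx⟩)
  map_rel' {x y} h := by
    by_cases hx : x ∈ S <;> by_cases hy : y ∈ S <;> simp [gluedCopies, hx, hy, h]

variable {G S k}

@[simp] lemma foldHom_inl (p : Fin k × ↥Sᶜ) : foldHom G S k (.inl p) = p.2 := rfl

@[simp] lemma foldHom_inr (s : S) : foldHom G S k (.inr s) = s := rfl

section Copy

variable [DecidablePred (· ∈ S)]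

lemma copyHom_of_mem (i : Fin k) {x : V} (hx : x ∈ S) : copyHom G S k i x = .inr ⟨x, hx⟩ :=
  dif_pos hx

lemma copyHom_of_notMem (i : Fin k) {x : V} (hx : x ∉ S) :
    copyHom G S k i x = .inl (i, ⟨x, hx⟩) :=
  dif_neg hx

lemma foldHom_copyHom (i : Fin k) (x : V) : foldHom G S k (copyHom G S k i x) = x := by
  by_cases hx : x ∈ S
  · rw [copyHom_of_mem i hx, foldHom_inr]
  · rw [copyHom_of_notMem i hx, foldHom_inl]

lemma copyHom_injective (i : Fin k) : Function.Injective (copyHom G S k i) :=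
  Function.LeftInverse.injective (foldHom_copyHom i)

end Copy

theorem exists_inr_mem_support_tail :
    ∀ {p q : Fin k × ↥Sᶜ} (w : (gluedCopies G S k).Walk (.inl p) (.inl q)), p.1 ≠ q.1 →
      ∃ s, .inr s ∈ w.support.tail
  | _, _, .nil, h => absurd rfl h
  | _, _, .cons (v := .inr s) _ _, _ => ⟨s, by simp⟩
  | _, _, .cons (v := .inl _) hadj w, h =>
    let ⟨s, hs⟩ := exists_inr_mem_support_tail w (hadj.1 ▸ h)
    ⟨s, by simp [List.mem_of_mem_tail hs]⟩

variable {z : (Fin k × ↥Sᶜ) ⊕ S} {C : (gluedCopies G S k).Walk z z}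

theorem two_mul_dist_le_length (hC : C.IsCycle) {s t : S} (hs : .inr s ∈ C.support)
    (ht : .inr t ∈ C.support) : 2 * G.dist s t ≤ C.length := by
  classical
  obtain ⟨p, q, hlen, -⟩ := hC.exists_walks_of_mem_support hs ht
  have hp : G.dist s t ≤ p.length :=
    (G.dist_le (p.map (foldHom G S k))).trans_eq (p.length_map _)
  have hq : G.dist t s ≤ q.length :=
    (G.dist_le (q.map (foldHom G S k))).trans_eq (q.length_map _)
  rw [dist_comm] at hq
  omega

theorem exists_ne_inr_mem_support (hC : C.IsCycle) {p q : Fin k × ↥Sᶜ}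
    (hp : .inl p ∈ C.support) (hq : .inl q ∈ C.support) (hpq : p.1 ≠ q.1) :
    ∃ s t, .inr s ∈ C.support ∧ .inr t ∈ C.support ∧ s ≠ t := by
  classical
  -- both arcs of `C` between the two copies pass through a hub, and their interiors are disjoint
  obtain ⟨w₁, w₂, -, hdisj, h₁, h₂⟩ := hC.exists_walks_of_mem_support hp hq
  obtain ⟨s, hs⟩ := exists_inr_mem_support_tail w₁ hpq
  obtain ⟨t, ht⟩ := exists_inr_mem_support_tail w₂ hpq.symm
  refine ⟨s, t, h₁ (List.mem_of_mem_tail hs), h₂ (List.mem_of_mem_tail ht), ?_⟩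
  rintro rfl
  exact hdisj hs ht

theorem injOn_foldHom_support (hC : C.IsCycle)
    (h : ∀ s t, .inr s ∈ C.support → .inr t ∈ C.support → s = t) :
    Set.InjOn (foldHom G S k) {x | x ∈ C.support} := by
  rintro (p | s) hp (q | t) hq hpq <;> simp only [foldHom_inl, foldHom_inr] at hpq
  · have hcopy : p.1 = q.1 := by
      by_contra hne
      obtain ⟨s, t, hs, ht, hst⟩ := exists_ne_inr_mem_support hC hp hq hne
      exact hst (h s t hs ht)
    rw [Prod.ext hcopy (Subtype.ext hpq)]
  · exact absurd (hpq ▸ t.2) p.2.2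
  · exact absurd (hpq ▸ s.2) q.2.2
  · rw [Subtype.ext hpq]

end gluedCopies

open gluedCopies

variable {G S k}

lemma card_gluedCopies_vertices [Finite V] :
    Nat.card ((Fin k × ↥Sᶜ) ⊕ S) = k * (Nat.card V - S.ncard) + S.ncard := by
  rw [Nat.card_sum, Nat.card_prod, Nat.card_fin, Nat.card_coe_set_eq, Nat.card_coe_set_eq,
    Set.ncard_compl]

lemma ncard_neighborSet_gluedCopies_inl (p : Fin k × ↥Sᶜ) :
    ((gluedCopies G S k).neighborSet (.inl p)).ncard = (G.neighborSet p.2).ncard := by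
  classical
  have hnbr : (gluedCopies G S k).neighborSet (.inl p) =
      copyHom G S k p.1 '' G.neighborSet p.2 := by
    ext z
    constructor
    · rcases z with q | s
      · rintro ⟨hpq, h⟩
        exact ⟨q.2, h, by rw [copyHom_of_notMem _ q.2.2, hpq]⟩
      · exact fun h => ⟨s, h, copyHom_of_mem _ s.2⟩
    · rintro ⟨y, hy, rfl⟩
      have h := (copyHom G S k p.1).map_adj hy
      rwa [copyHom_of_notMem _ p.2.2] at h
  rw [hnbr, Set.ncard_image_of_injective _ (copyHom_injective _)]

lemma ncard_neighborSet_gluedCopies_inr (s : S) (hs : ∀ t ∈ S, ¬ G.Adj s t) :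
    ((gluedCopies G S k).neighborSet (.inr s)).ncard = k * (G.neighborSet s).ncard := by
  let f (q : Fin k × G.neighborSet s) : (Fin k × ↥Sᶜ) ⊕ S :=
    .inl (q.1, ⟨q.2, fun h => hs _ h q.2.2⟩)
  have hf : Function.Injective f := by
    rintro ⟨i, y⟩ ⟨j, y'⟩ h
    simp only [f, Sum.inl.injEq, Prod.mk.injEq, Subtype.mk.injEq] at h
    rw [h.1, Subtype.ext h.2]
  have hnbr : (gluedCopies G S k).neighborSet (.inr s) = Set.range f := by
    ext z
    constructor
    · rcases z with q | t
      · exact fun h => ⟨(q.1, ⟨q.2, h⟩), rfl⟩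
      · exact fun h => (hs t t.2 h).elim
    · rintro ⟨⟨i, y⟩, rfl⟩
      exact y.2
  rw [hnbr, Set.ncard_range_of_injective hf, Nat.card_prod, Nat.card_fin, Nat.card_coe_set_eq]

theorem egirth_gluedCopies_le (hk : 0 < k) : (gluedCopies G S k).egirth ≤ G.egirth := by
  classical
  exact IsContained.egirth_le ⟨(copyHom G S k ⟨0, hk⟩).toCopy (copyHom_injective _)⟩

theorem le_egirth_gluedCopies {g : ℕ} (hG : (g : ℕ∞) ≤ G.egirth)
    (hS : ∀ s ∈ S, ∀ t ∈ S, s ≠ t → g ≤ 2 * G.dist s t) :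
    (g : ℕ∞) ≤ (gluedCopies G S k).egirth := by
  refine le_egirth.2 fun z C hC => ?_
  by_cases h : ∀ s t, .inr s ∈ C.support → .inr t ∈ C.support → s = t
  · simpa using hG.trans (egirth_le_length (hC.map_of_injOn (injOn_foldHom_support hC h)))
  · push Not at h
    obtain ⟨s, t, hs, ht, hst⟩ := h
    exact_mod_cast (hS s s.2 t t.2 (Subtype.coe_ne_coe.2 hst)).trans
      (two_mul_dist_le_length hC hs ht)

end GluedCopies

end SimpleGraph

open SimpleGraph

/-- Let `g ≥ 4` be an even integer and let `G` be a finite 3-regular simple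
graph of girth `g` on `n` vertices that contains two vertices at distance at least `g/2`.
Then for every integer `k ≥ 1`, setting `m = 3k`, there exists a finite simple graph `H`
of girth exactly `g` and order `k(n−2)+2` which has two vertices of degree `m` while each
of its remaining `k(n−2)` vertices has degree `3`. -/
theorem statement0 (g : ℕ) (hg4 : 4 ≤ g) (hgeven : Even g)
    (V : Type) [Fintype V] (G : SimpleGraph V)
    (hreg : ∀ v : V, (G.neighborSet v).ncard = 3)
    (hgirth : G.egirth = (g : ℕ∞))
    (hdist : ∃ u v : V, g / 2 ≤ G.dist u v)
    (k : ℕ) (hk : 1 ≤ k) :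
    ∃ H : SimpleGraph (Fin (k * (Fintype.card V - 2) + 2)),
      H.egirth = (g : ℕ∞) ∧
      ∃ a b : Fin (k * (Fintype.card V - 2) + 2), a ≠ b ∧
        (H.neighborSet a).ncard = 3 * k ∧ (H.neighborSet b).ncard = 3 * k ∧
        ∀ w, w ≠ a → w ≠ b → (H.neighborSet w).ncard = 3 := by
  obtain ⟨u, v, huv⟩ := hdist
  have hne : u ≠ v := by
    rintro rfl
    rw [dist_self] at huv
    omega
  have hnadj : ¬ G.Adj u v := fun h => by
    rw [dist_eq_one_iff_adj.2 h] at huv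
    omega
  set S : Set V := {u, v}
  have hindep : ∀ s ∈ S, ∀ t ∈ S, ¬ G.Adj s t := by
    rintro s (rfl | rfl) t (rfl | rfl)
    exacts [G.irrefl, hnadj, fun h => hnadj h.symm, G.irrefl]
  have hfar : ∀ s ∈ S, ∀ t ∈ S, s ≠ t → g ≤ 2 * G.dist s t := by
    have hg : g ≤ 2 * G.dist u v := by
      obtain ⟨m, rfl⟩ := hgeven
      omega
    rintro s (rfl | rfl) t (rfl | rfl) hst
    exacts [absurd rfl hst, hg, dist_comm (G := G) ▸ hg, absurd rfl hst]
  classical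
  have hcard : Fintype.card ((Fin k × ↥Sᶜ) ⊕ S) = k * (Fintype.card V - 2) + 2 := by
    rw [← Nat.card_eq_fintype_card, card_gluedCopies_vertices, Set.ncard_pair hne,
      Nat.card_eq_fintype_card]
  let e := (gluedCopies G S k).overFinIso hcard
  refine ⟨(gluedCopies G S k).overFin hcard, ?_, e (.inr ⟨u, by simp [S]⟩),
    e (.inr ⟨v, by simp [S]⟩), by simpa using hne, ?_, ?_, ?_⟩
  · rw [← e.egirth_eq]
    exact le_antisymm (hgirth ▸ egirth_gluedCopies_le hk) (le_egirth_gluedCopies hgirth.ge hfar)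
  · rw [e.ncard_neighborSet_eq, ncard_neighborSet_gluedCopies_inr _ (hindep u (by simp [S])), hreg, mul_comm]
  · rw [e.ncard_neighborSet_eq, ncard_neighborSet_gluedCopies_inr _ (hindep v (by simp [S])), hreg, mul_comm]
  · intro w hwu hwv
    obtain ⟨p | ⟨s, rfl | rfl⟩, rfl⟩ := e.surjective w
    · rw [e.ncard_neighborSet_eq, ncard_neighborSet_gluedCopies_inl, hreg]
    · exact absurd rfl hwu
    · exact absurd rfl hwv
end

section
/- Let g ≥ 4 be an even integer and let G be a finite 3-regular simple graph of girth g on n vertices that contains two vertices at distance at least g/2. Then for every integer k ≥ 1, setting m = 3k+1, there exists a finite simple graph H of girth exactly g and order k(n−2)+n+2 which has exactly two vertices of degree m while each of its remaining k(n−2)+n vertices has degree 3. -/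
/-!
Pick `u, v` at distance at least `g/2` and an edge `pq` off a shortest cycle `C` of `G` (at a
vertex of `C`, one of its three edges leaves `C`). Take `k` copies of `G - u - v`, one copy of
`G - pq`, and two hubs: `a` joined to the neighbours of `u` in every copy of `G - u - v` and to `p`,
`b` joined to the neighbours of `v` and to `q`. The hubs have degree `3k + 1`, every other vertex
keeps degree `3`, and `C` survives in the copy of `G - pq`.

For the lower bound on the girth: a walk that avoids the hubs stays in one copy. A copy of
`G - u - v` together with the hubs is an induced copy of `G`, and in the copy of `G - pq` each
hub is pendant; so a cycle missing a hub has length at least `g`. A path from `a` to `b` has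
length at least `dist(u, v) ≥ g/2` through a copy of `G - u - v`, and at least `g + 1` through
the copy of `G - pq`, where it closes a cycle with `pq`. A cycle through both hubs consists of two
such paths, so it too has length at least `g`.
-/

namespace SimpleGraph

variable {α β : Type*} {G : SimpleGraph α} {H : SimpleGraph β}

theorem Walk.apply_eq_of_mem_support {γ : Type*} {S : Set α} (f : α → γ)
    (hf : ∀ x y, G.Adj x y → x ∉ S → y ∉ S → f x = f y) {x y : α} (w : G.Walk x y)
    (hw : ∀ z ∈ w.support, z ∉ S) : ∀ z ∈ w.support, f z = f x := by
  induction w with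
  | nil => simp
  | @cons x x' y h w ih =>
    intro z hz
    have hw' : ∀ z ∈ w.support, z ∉ S := fun z hz => hw z (List.mem_cons_of_mem _ hz)
    rcases List.mem_cons.mp hz with rfl | hz
    · rfl
    · rw [ih hw' z hz, hf x' x h.symm (hw' _ w.start_mem_support) (hw x (by simp))]

@[simp]
theorem Walk.length_induce {s : Set α} {x y : α} (w : G.Walk x y)
    (hw : ∀ z ∈ w.support, z ∈ s) :
    (w.induce s hw).length = w.length := by
  rw [← Walk.length_map (Embedding.induce _).toHom, Walk.map_induce]; rfl

theorem Walk.two_mul_le_length_of_mem_support {m : ℕ} {a b x : α} (w : G.Walk x x)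
    (ha : a ∈ w.support) (hb : b ∈ w.support) (h : ∀ P : G.Walk a b, m ≤ P.length) :
    2 * m ≤ w.length := by
  classical
  have hb' : b ∈ (w.rotate a ha).support := (w.mem_support_rotate_iff a ha).mpr hb
  have hsplit := congrArg Walk.length ((w.rotate a ha).take_spec hb')
  rw [length_append, length_rotate] at hsplit
  have h₁ := h ((w.rotate a ha).takeUntil b hb')
  have h₂ := h ((w.rotate a ha).dropUntil b hb').reverse
  rw [length_reverse] at h₂
  omega

theorem Embedding.egirth_le_length (f : G ↪g H) {x : β} {w : H.Walk x x} (hw : w.IsCycle)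
    (hws : ∀ z ∈ w.support, z ∈ Set.range f) : G.egirth ≤ w.length := by
  have hcyc : (w.induce _ hws).IsCycle := by
    have hinj : Function.Injective (Embedding.induce (G := H) (Set.range f)).toHom :=
      (Embedding.induce (G := H) _).injective
    rwa [← Walk.isCycle_map_iff_of_injective hinj, Walk.map_induce]
  calc G.egirth ≤ (H.induce (Set.range f)).egirth := f.isoInduceRange.isContained'.egirth_le
    _ ≤ (w.induce _ hws).length := SimpleGraph.egirth_le_length hcyc
    _ = w.length := by rw [w.length_induce hws]

theorem Embedding.exists_walk_of_support_subset_range (f : G ↪g H) {x y : α} {a b : β}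
    (w : H.Walk a b) (hw : ∀ z ∈ w.support, z ∈ Set.range f) (ha : f x = a) (hb : f y = b) :
    ∃ w' : G.Walk x y, w'.length = w.length := by
  subst ha hb
  have hsymm : ∀ z, f.isoInduceRange.symm ⟨f z, Set.mem_range_self z⟩ = z := fun z =>
    f.isoInduceRange.symm_apply_eq.mpr rfl
  exact ⟨((w.induce _ hw).map f.isoInduceRange.symm.toHom).copy (hsymm x) (hsymm y), by simp⟩

theorem Embedding.ncard_neighborSet_eq_of_subset_range (f : G ↪g H) {x : α}
    (h : H.neighborSet (f x) ⊆ Set.range f) :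
    (H.neighborSet (f x)).ncard = (G.neighborSet x).ncard := by
  have : H.neighborSet (f x) = f '' G.neighborSet x := by
    refine Set.Subset.antisymm (fun y hy => ?_) ?_
    · obtain ⟨y, rfl⟩ := h hy
      exact ⟨y, f.map_adj_iff.mp hy, rfl⟩
    · rintro _ ⟨y, hy, rfl⟩
      exact f.map_adj_iff.mpr hy
  rw [this, Set.ncard_image_of_injective _ f.injective]

theorem egirth_le_length_add_one_of_deleteEdges {p q : α} (hpq : G.Adj p q)
    (w : (G.deleteEdges {s(p, q)}).Walk p q) : G.egirth ≤ w.length + 1 := by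
  classical
  set P := w.bypass.mapLe (G.deleteEdges_le _)
  have hcyc : (Walk.cons hpq.symm P).IsCycle := by
    refine (Walk.cons_isCycle_iff _ _).mpr
      ⟨(Walk.isPath_mapLe _).mpr w.bypass_isPath, fun he => ?_⟩
    rw [Walk.edges_mapLe_eq_edges] at he
    have := w.bypass.edges_subset_edgeSet he
    simp [Sym2.eq_swap] at this
  have hlen : P.length ≤ w.length := by
    rw [Walk.length_mapLe]; exact w.length_bypass_le_length
  calc G.egirth ≤ (Walk.cons hpq.symm P).length := egirth_le_length hcyc
    _ ≤ w.length + 1 := by rw [Walk.length_cons]; exact_mod_cast Nat.add_le_add_right hlen 1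

theorem Walk.IsCycle.exists_adj_notMem_edges {x : α} {C : G.Walk x x} (hC : C.IsCycle)
    (hx : 2 < (G.neighborSet x).ncard) : ∃ y, G.Adj x y ∧ s(x, y) ∉ C.edges := by
  by_contra! h
  have hsub : G.neighborSet x ⊆ C.toSubgraph.neighborSet x := fun y hy =>
    C.mem_edges_toSubgraph.mpr (h y hy)
  have h2 := hC.ncard_neighborSet_toSubgraph_eq_two C.start_mem_support
  have := Set.ncard_le_ncard hsub (Set.finite_of_ncard_pos (by omega))
  omega

theorem Iso.ncard_neighborSet_eq_s2 (f : G ≃g H) (x : α) :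
    (H.neighborSet (f x)).ncard = (G.neighborSet x).ncard :=
  f.toEmbedding.ncard_neighborSet_eq_of_subset_range (by simp [f.surjective.range_eq])

end SimpleGraph

namespace HubGraph

open SimpleGraph

variable {V : Type} (G : SimpleGraph V) (u v p q : V) (k : ℕ)

/- `inl false` and `inl true` are the hubs, in the roles of `u` and `v`; `inr (inl (i, z))` is `z`
in the `i`-th copy of `G - u - v`, and `inr (inr w)` is `w` in the copy of `G - pq`. -/
abbrev Vert : Type := Bool ⊕ (Fin k × {x : V // x ≠ u ∧ x ≠ v}) ⊕ V

def graph : SimpleGraph (Vert u v k) where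
  Adj
    | .inl c, .inr (.inl (_, z)) | .inr (.inl (_, z)), .inl c => G.Adj (cond c v u) z
    | .inl c, .inr (.inr w) | .inr (.inr w), .inl c => w = cond c q p
    | .inr (.inl (i, z)), .inr (.inl (j, z')) => i = j ∧ G.Adj z z'
    | .inr (.inr w), .inr (.inr w') => (G.deleteEdges {s(p, q)}).Adj w w'
    | _, _ => False
  symm := ⟨by
    rintro (c | ⟨i, z⟩ | w) (c' | ⟨j, z'⟩ | w') h <;> simp_all [adj_comm, eq_comm]⟩
  loopless := ⟨by rintro (c | ⟨i, z⟩ | w) h <;> simp_all⟩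

variable {G u v p q k}

-- `none` marks the copy of `G - pq`; the value at the hubs is never used.
def block : Vert u v k → Option (Fin k)
  | .inr (.inl (i, _)) => some i
  | _ => none

open scoped Classical in
noncomputable def copyMap (i : Fin k) (x : V) : Vert u v k :=
  if hu : x = u then .inl false
  else if hv : x = v then .inl true
  else .inr (.inl (i, ⟨x, hu, hv⟩))

noncomputable def copyEmb (hnadj : ¬G.Adj u v) (i : Fin k) :
    G ↪g graph G u v p q k where
  toFun := copyMap i
  inj' x y h := by
    unfold copyMap at h
    split_ifs at h <;> simp_all
  map_rel_iff' {x y} := by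
    change (graph G u v p q k).Adj (copyMap i x) (copyMap i y) ↔ _
    unfold copyMap
    split_ifs <;> simp_all [graph, adj_comm]

@[simp]
lemma coe_copyEmb (hnadj : ¬G.Adj u v) (i : Fin k) :
    ⇑(copyEmb (p := p) (q := q) hnadj i) = copyMap i := rfl

def fullEmb : G.deleteEdges {s(p, q)} ↪g graph G u v p q k where
  toFun w := .inr (.inr w)
  inj' _ _ := by simp
  map_rel_iff' := Iff.rfl

lemma block_eq_of_adj {x y : Vert u v k} (h : (graph G u v p q k).Adj x y) (hx : ¬x.isLeft)
    (hy : ¬y.isLeft) : block x = block y := by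
  rcases x with c | ⟨i, z⟩ | w <;> rcases y with c' | ⟨j, z'⟩ | w' <;>
    simp_all [graph, block]

lemma copyMap_of_ne (i : Fin k) {x : V} (hu : x ≠ u) (hv : x ≠ v) :
    copyMap i x = .inr (.inl (i, ⟨x, hu, hv⟩)) := by
  simp [copyMap, hu, hv]

@[simp]
lemma copyMap_left (i : Fin k) : copyMap (u := u) (v := v) i u = .inl false := by
  simp [copyMap]

lemma copyMap_right (huv : u ≠ v) (i : Fin k) : copyMap (u := u) (v := v) i v = .inl true := by
  simp [copyMap, huv.symm]

lemma inl_mem_range_copyEmb (huv : u ≠ v) (hnadj : ¬G.Adj u v) (i : Fin k) (c : Bool) :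
    .inl c ∈ Set.range (copyEmb (p := p) (q := q) hnadj i) := by
  cases c
  · exact ⟨u, by simp⟩
  · exact ⟨v, by simp [copyMap_right huv]⟩

lemma mem_range_copyEmb (hnadj : ¬G.Adj u v) {i : Fin k} {x : Vert u v k}
    (hx : block x = some i) : x ∈ Set.range (copyEmb (p := p) (q := q) hnadj i) := by
  rcases x with _ | ⟨j, z, hzu, hzv⟩ | w <;>
    simp only [block, reduceCtorEq, Option.some.injEq] at hx
  exact ⟨z, by simp [copyMap_of_ne i hzu hzv, hx]⟩

lemma mem_range_fullEmb {x : Vert u v k} (hx : ¬x.isLeft) (hb : block x = none) :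
    x ∈ Set.range (fullEmb (G := G) (p := p) (q := q)) := by
  rcases x with c | ⟨j, z⟩ | w
  · simp at hx
  · simp [block] at hb
  · exact ⟨w, rfl⟩

lemma eq_pendant_of_adj {x : Vert u v k} {c : Bool} (h : (graph G u v p q k).Adj x (.inl c))
    (hx : ¬x.isLeft) (hb : block x = none) : x = .inr (.inr (cond c q p)) := by
  rcases x with c' | ⟨j, z⟩ | w <;> simp_all [graph, block]

lemma not_isLeft_of_adj_inl {x : Vert u v k} {c : Bool} (h : (graph G u v p q k).Adj (.inl c) x) :
    ¬x.isLeft := by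
  rcases x with c' | _ | _ <;> simp_all [graph]

lemma forall_mem_dropLast_support {c : Bool} {x : Vert u v k} (hx : ¬x.isLeft)
    (Q : (graph G u v p q k).Walk x (.inl c)) (hQ : Q.IsPath) (hc : .inl (!c) ∉ Q.support) :
    ∀ z ∈ Q.dropLast.support, ¬z.isLeft ∧ block z = block x := by
  have hnil : ¬Q.Nil := fun h => by simp [h.eq] at hx
  have hsupp := Q.support_dropLast_concat hnil
  have hhub : ∀ z ∈ Q.dropLast.support, z ∉ {z : Vert u v k | z.isLeft} := by
    rintro (c' | _ | _) hz hzl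
    · have hnd := hsupp ▸ hQ.support_nodup
      rw [List.nodup_append] at hnd
      rcases Bool.eq_or_eq_not c' c with rfl | rfl
      · exact hnd.2.2 _ hz _ List.mem_cons_self rfl
      · exact hc (hsupp ▸ List.mem_append_left _ hz)
    all_goals simp at hzl
  exact fun z hz => ⟨hhub z hz, Q.dropLast.apply_eq_of_mem_support block
    (fun _ _ h hx hy => block_eq_of_adj h hx hy) hhub z hz⟩

lemma support_cons_subset_range_copyEmb (huv : u ≠ v) (hnadj : ¬G.Adj u v) {c c' : Bool}
    {x : Vert u v k} {i : Fin k} (h : (graph G u v p q k).Adj (.inl c) x)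
    (Q : (graph G u v p q k).Walk x (.inl c')) (hQ : Q.IsPath) (hc' : .inl (!c') ∉ Q.support)
    (hb : block x = some i) :
    ∀ z ∈ (Walk.cons h Q).support, z ∈ Set.range (copyEmb (p := p) (q := q) hnadj i) := by
  have hx := not_isLeft_of_adj_inl h
  have hR := forall_mem_dropLast_support hx Q hQ hc'
  intro z hz
  rw [Walk.support_cons, ← Q.support_dropLast_concat fun h => by simp [h.eq] at hx,
    List.mem_cons, List.mem_append, List.mem_singleton] at hz
  rcases hz with rfl | hz | rfl
  · exact inl_mem_range_copyEmb huv hnadj i _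
  · exact mem_range_copyEmb hnadj ((hR z hz).2.trans hb)
  · exact inl_mem_range_copyEmb huv hnadj i _

lemma le_length_of_isPath_inl (hpq : G.Adj p q) (huv : u ≠ v) (hnadj : ¬G.Adj u v) {m : ℕ}
    (hg : 2 * m ≤ G.egirth) (hd : m ≤ G.dist u v)
    {P : (graph G u v p q k).Walk (.inl false) (.inl true)} (hP : P.IsPath) : m ≤ P.length := by
  cases P with
  | @cons _ x _ h Q =>
  obtain ⟨hQ, hfalse⟩ := (Walk.cons_isPath_iff h Q).mp hP
  have hx := not_isLeft_of_adj_inl h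
  have hnil : ¬Q.Nil := fun h => by simp [h.eq] at hx
  have hR := forall_mem_dropLast_support hx Q hQ hfalse
  cases hb : block x with
  | some i =>
    obtain ⟨P', hP'⟩ := (copyEmb hnadj i).exists_walk_of_support_subset_range (x := u) (y := v)
      (Walk.cons h Q) (support_cons_subset_range_copyEmb huv hnadj h Q hQ hfalse hb) (by simp)
      (by simp [copyMap_right huv])
    exact hd.trans (hP' ▸ G.dist_le P')
  | none =>
    have hend := hR _ Q.dropLast.end_mem_support
    have hxp : x = .inr (.inr p) := eq_pendant_of_adj h.symm hx hb
    have hyq : Q.penultimate = .inr (.inr q) :=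
      eq_pendant_of_adj (Q.adj_penultimate hnil) hend.1 (hend.2.trans hb)
    have hrange : ∀ z ∈ Q.dropLast.support,
        z ∈ Set.range (fullEmb (G := G) (p := p) (q := q)) :=
      fun z hz => mem_range_fullEmb (hR z hz).1 ((hR z hz).2.trans hb)
    obtain ⟨R, hR'⟩ := fullEmb.exists_walk_of_support_subset_range
      Q.dropLast hrange hxp.symm hyq.symm
    have hcyc := egirth_le_length_add_one_of_deleteEdges hpq R
    have hlen := Q.length_dropLast_add_one hnil
    rw [hR'] at hcyc
    have : 2 * m ≤ Q.dropLast.length + 1 := by exact_mod_cast hg.trans hcyc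
    rw [Walk.length_cons]
    omega

lemma egirth_le_length_of_inl_mem (huv : u ≠ v) (hnadj : ¬G.Adj u v) {c : Bool} {x : Vert u v k}
    {W : (graph G u v p q k).Walk x x} (hW : W.IsCycle) (hc : .inl c ∈ W.support)
    (hc' : .inl (!c) ∉ W.support) : G.egirth ≤ W.length := by
  classical
  rw [← W.length_rotate _ hc]
  have hW' := hW.rotate hc
  have hcW : .inl (!c) ∉ (W.rotate _ hc).support := by simpa using hc'
  generalize W.rotate _ hc = W' at hW' hcW
  cases W' with
  | nil => exact (Walk.not_isCycle_nil hW').elim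
  | @cons _ y _ h Q =>
  have hQ := ((Walk.cons_isCycle_iff Q h).mp hW').1
  have hy := not_isLeft_of_adj_inl h
  have hcQ : .inl (!c) ∉ Q.support := by simpa using hcW
  cases hb : block y with
  | some i =>
    exact (copyEmb hnadj i).egirth_le_length hW'
      (support_cons_subset_range_copyEmb huv hnadj h Q hQ hcQ hb)
  | none =>
    have hnil : ¬Q.Nil := fun h => by simp [h.eq] at hy
    have hend := forall_mem_dropLast_support hy Q hQ hcQ _ Q.dropLast.end_mem_support
    -- the cycle leaves the hub through two vertices, but the hub has one neighbour in `G - pq`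
    have hne := hW'.snd_ne_penultimate
    rw [Walk.snd_cons, Walk.penultimate_cons_of_not_nil _ _ hnil] at hne
    exact (hne ((eq_pendant_of_adj h.symm hy hb).trans
      (eq_pendant_of_adj (Q.adj_penultimate hnil) hend.1 (hend.2.trans hb)).symm)).elim

lemma egirth_le_length_of_forall_not_isLeft (hnadj : ¬G.Adj u v) {x : Vert u v k}
    {W : (graph G u v p q k).Walk x x} (hW : W.IsCycle) (hS : ∀ z ∈ W.support, ¬z.isLeft) :
    G.egirth ≤ W.length := by
  have hblock := W.apply_eq_of_mem_support (S := {z : Vert u v k | z.isLeft}) block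
    (fun _ _ h hx hy => block_eq_of_adj h hx hy) hS
  cases hb : block x with
  | some i =>
    exact (copyEmb hnadj i).egirth_le_length hW fun z hz =>
      mem_range_copyEmb hnadj ((hblock z hz).trans hb)
  | none =>
    calc G.egirth ≤ (G.deleteEdges {s(p, q)}).egirth := egirth_anti (G.deleteEdges_le _)
      _ ≤ W.length := fullEmb.egirth_le_length hW fun z hz =>
        mem_range_fullEmb (hS z hz) ((hblock z hz).trans hb)

theorem le_egirth_graph (hpq : G.Adj p q) (huv : u ≠ v) (hnadj : ¬G.Adj u v) {m : ℕ}
    (hg : 2 * m ≤ G.egirth) (hd : m ≤ G.dist u v) :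
    (2 * m : ℕ∞) ≤ (graph G u v p q k).egirth := by
  classical
  rw [le_egirth]
  intro x W hW
  by_cases hf : .inl false ∈ W.support <;> by_cases ht : .inl true ∈ W.support
  · exact_mod_cast W.two_mul_le_length_of_mem_support hf ht fun P =>
      (le_length_of_isPath_inl hpq huv hnadj hg hd P.bypass_isPath).trans
        P.length_bypass_le_length
  · exact hg.trans (egirth_le_length_of_inl_mem huv hnadj hW hf ht)
  · exact hg.trans (egirth_le_length_of_inl_mem huv hnadj hW ht hf)
  · refine hg.trans (egirth_le_length_of_forall_not_isLeft hnadj hW fun z hz hzl => ?_)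
    rcases z with (_ | _) | _ | _ <;> simp_all

theorem egirth_graph_le {x : V} {C : G.Walk x x} (hC : C.IsCycle) (hpqC : s(p, q) ∉ C.edges) :
    (graph G u v p q k).egirth ≤ C.length :=
  calc _ ≤ (G.deleteEdges {s(p, q)}).egirth := fullEmb.isContained.egirth_le
    _ ≤ (C.toDeleteEdge s(p, q) hpqC).length := egirth_le_length (hC.transfer _)
    _ = C.length := by rw [Walk.length_transfer]

lemma ncard_neighborSet_inr_inl (huv : u ≠ v) (hnadj : ¬G.Adj u v) (i : Fin k)
    (z : {x : V // x ≠ u ∧ x ≠ v}) :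
    ((graph G u v p q k).neighborSet (.inr (.inl (i, z)))).ncard = (G.neighborSet z).ncard := by
  have hz : copyEmb (p := p) (q := q) hnadj i z = .inr (.inl (i, z)) := copyMap_of_ne i z.2.1 z.2.2
  rw [← hz]
  refine (copyEmb hnadj i).ncard_neighborSet_eq_of_subset_range fun y hy => ?_
  rw [hz] at hy
  rcases y with c | ⟨j, z'⟩ | w
  · exact inl_mem_range_copyEmb huv hnadj i c
  · exact mem_range_copyEmb hnadj (by simp_all [graph, block])
  · simp [graph] at hy

lemma ncard_neighborSet_inr_inr (hpq : G.Adj p q) (w : V) :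
    ((graph G u v p q k).neighborSet (.inr (.inr w))).ncard = (G.neighborSet w).ncard := by
  classical
  -- the neighbour across the deleted edge `pq` is replaced by the hub attached to `w`
  let f : V → Vert u v k := fun x =>
    if s(w, x) = s(p, q) then .inl (decide (w = q)) else .inr (.inr x)
  have hf : f.Injective := by
    intro x x' h
    simp only [f] at h
    split_ifs at h with h₁ h₂ h₂
    · exact Sym2.congr_right.mp (h₁.trans h₂.symm)
    all_goals simp_all
  suffices (graph G u v p q k).neighborSet (.inr (.inr w)) = f '' G.neighborSet w by
    rw [this, Set.ncard_image_of_injective _ hf]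
  ext y
  have hpq' := hpq.ne
  rcases y with (_ | _) | _ | _ <;>
    simp only [graph, f, Set.mem_image, mem_neighborSet, Sym2.eq_iff, deleteEdges_adj,
      Set.mem_singleton_iff] <;>
    grind [adj_comm]

lemma ncard_neighborSet_inl [Finite V] (hnadj : ¬G.Adj u v) (c : Bool) :
    ((graph G u v p q k).neighborSet (.inl c)).ncard =
      k * (G.neighborSet (cond c v u)).ncard + 1 := by
  have hN : (graph G u v p q k).neighborSet (.inl c) =
      insert (.inr (.inr (cond c q p)))
        ((Sum.inr ∘ Sum.inl) ''
          (Set.univ ×ˢ (Subtype.val ⁻¹' G.neighborSet (cond c v u)))) := by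
    ext y
    rcases y with _ | ⟨i, z⟩ | w <;> simp [graph, eq_comm]
  have hsub : G.neighborSet (cond c v u) ⊆
      Set.range (Subtype.val : {x : V // x ≠ u ∧ x ≠ v} → V) := by
    intro z hz
    cases c
    · exact ⟨⟨z, hz.ne', fun h => hnadj (h ▸ hz)⟩, rfl⟩
    · exact ⟨⟨z, fun h => hnadj (h ▸ hz).symm, hz.ne'⟩, rfl⟩
  rw [hN, Set.ncard_insert_of_notMem (by simp) (Set.toFinite _),
    Set.ncard_image_of_injective _ (Sum.inr_injective.comp Sum.inl_injective), Set.ncard_prod,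
    Set.ncard_univ, Nat.card_fin, Set.ncard_preimage_of_injective_subset_range
      Subtype.val_injective hsub]

lemma card_vert [Fintype V] [DecidableEq V] (huv : u ≠ v) :
    Fintype.card (Vert u v k) = k * (Fintype.card V - 2) + Fintype.card V + 2 := by
  have : Fintype.card {x : V // x ∉ ({u, v} : Finset V)} = Fintype.card V - 2 := by
    rw [Fintype.card_subtype_compl, Fintype.card_coe, Finset.card_pair huv]
  simp only [Fintype.card_sum, Fintype.card_prod, Fintype.card_bool, Fintype.card_fin]
  simp only [Finset.mem_insert, Finset.mem_singleton, not_or] at this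
  rw [this]
  ring

end HubGraph

open SimpleGraph HubGraph in
theorem statement2_general (g : ℕ) (hg4 : 4 ≤ g) (hgeven : Even g)
    (V : Type) [Fintype V] (G : SimpleGraph V)
    (hreg : ∀ v : V, (G.neighborSet v).ncard = 3)
    (hgirth : G.egirth = (g : ℕ∞))
    (hdist : ∃ u v : V, g / 2 ≤ G.dist u v)
    (k : ℕ) :
    ∃ H : SimpleGraph (Fin (k * (Fintype.card V - 2) + Fintype.card V + 2)),
      H.egirth = (g : ℕ∞) ∧
      ∃ a b : Fin (k * (Fintype.card V - 2) + Fintype.card V + 2), a ≠ b ∧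
        (H.neighborSet a).ncard = 3 * k + 1 ∧ (H.neighborSet b).ncard = 3 * k + 1 ∧
        ∀ w, w ≠ a → w ≠ b → (H.neighborSet w).ncard = 3 := by
  classical
  obtain ⟨u, v, hd⟩ := hdist
  obtain ⟨m, rfl⟩ := even_iff_two_dvd.mp hgeven
  have hm : m ≤ G.dist u v := by omega
  have huv : u ≠ v := by rintro rfl; rw [dist_self] at hd; omega
  have hnadj : ¬G.Adj u v := fun h => by rw [← dist_eq_one_iff_adj] at h; omega
  obtain ⟨x, C, hC, hCg⟩ := (exists_egirth_eq_length (G := G)).mpr <| by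
    rw [← egirth_eq_top, hgirth]; exact ENat.natCast_ne_top _
  obtain ⟨y, hxy, hCxy⟩ := hC.exists_adj_notMem_edges (by rw [hreg]; norm_num)
  let e := Fintype.equivFinOfCardEq (card_vert (k := k) huv)
  let φ := Iso.map e (graph G u v x y k)
  have hdeg : ∀ z, (((graph G u v x y k).map e).neighborSet (e z)).ncard =
      ((graph G u v x y k).neighborSet z).ncard := φ.ncard_neighborSet_eq_s2
  refine ⟨(graph G u v x y k).map e, ?_, e (.inl false), e (.inl true), by simp,
    by rw [hdeg, ncard_neighborSet_inl hnadj, hreg]; ring,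
    by rw [hdeg, ncard_neighborSet_inl hnadj, hreg]; ring, fun w hwa hwb => ?_⟩
  · rw [← φ.egirth_eq]
    refine le_antisymm ((egirth_graph_le hC hCxy).trans_eq (hCg.symm.trans hgirth)) ?_
    exact_mod_cast le_egirth_graph hxy huv hnadj (by rw [hgirth]; norm_cast) hm
  obtain ⟨z, rfl⟩ := e.surjective w
  rw [hdeg]
  rcases z with c | ⟨i, z⟩ | z
  · cases c <;> simp at hwa hwb
  · rw [ncard_neighborSet_inr_inl huv hnadj, hreg]
  · rw [ncard_neighborSet_inr_inr hxy, hreg]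

/-- Let `g ≥ 4` be an even integer and let `G` be a finite 3-regular simple
graph of girth `g` on `n` vertices that contains two vertices at distance at least `g/2`.
Then for every integer `k ≥ 1`, setting `m = 3k+1`, there exists a finite simple graph `H`
of girth exactly `g` and order `k(n−2)+n+2` which has exactly two vertices of degree `m`
while each of its remaining `k(n−2)+n` vertices has degree `3`. -/
theorem statement2 (g : ℕ) (hg4 : 4 ≤ g) (hgeven : Even g)
    (V : Type) [Fintype V] (G : SimpleGraph V)
    (hreg : ∀ v : V, (G.neighborSet v).ncard = 3)
    (hgirth : G.egirth = (g : ℕ∞))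
    (hdist : ∃ u v : V, g / 2 ≤ G.dist u v)
    (k : ℕ) (hk : 1 ≤ k) :
    ∃ H : SimpleGraph (Fin (k * (Fintype.card V - 2) + Fintype.card V + 2)),
      H.egirth = (g : ℕ∞) ∧
      ∃ a b : Fin (k * (Fintype.card V - 2) + Fintype.card V + 2), a ≠ b ∧
        (H.neighborSet a).ncard = 3 * k + 1 ∧ (H.neighborSet b).ncard = 3 * k + 1 ∧
        ∀ w, w ≠ a → w ≠ b → (H.neighborSet w).ncard = 3 :=
  statement2_general g hg4 hgeven V G hreg hgirth hdist k
end

section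
/- Let W = (w_0, w_1, …, w_ℓ) with w_ℓ = w_0 and ℓ ≥ 3 be a closed walk in the underlying graph of a voltage digraph over ZMod m that is non-reversing, i.e. no step is immediately followed by the same edge traversed in the reverse direction (including cyclically at the starting point). Suppose the net voltage of W equals 0 in ZMod m, and that for all indices 0 ≤ i < j ≤ ℓ with (i, j) ≠ (0, ℓ) and w_i = w_j, the net voltage of the segment (w_i, …, w_j) is nonzero in ZMod m. Then the lift of W — the closed walk in the lift graph starting at (w_0, 0) whose r-th vertex is (w_r, s_r), where s_r is the net voltage of the first r steps of W — is a cycle of length ℓ in the lift graph. -/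
/-- A voltage digraph over `ZMod m`: an irreflexive arc set `A ⊆ V × V` together with a
voltage function assigning to each arc an element of `ZMod m`. -/
structure VoltageDigraph (V : Type) (m : ℕ) where
  A : Set (V × V)
  irrefl : ∀ v : V, (v, v) ∉ A
  vol : V × V → ZMod m

namespace VoltageDigraph

variable {V : Type} {m : ℕ}

/-- The underlying simple graph of a voltage digraph: `v` is adjacent to `w` iff
`(v,w) ∈ A` or `(w,v) ∈ A`. -/
def underlying (D : VoltageDigraph V m) : SimpleGraph V where
  Adj v w := (v, w) ∈ D.A ∨ (w, v) ∈ D.A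
  symm := ⟨fun v w h => h.symm⟩
  loopless := ⟨fun v h => h.elim (D.irrefl v) (D.irrefl v)⟩

/-- The lift of a voltage digraph: the simple graph on `V × ZMod m` in which `(v,i)` and
`(w,j)` are adjacent iff `(v,w) ∈ A` and `j = i + vol (v,w)`, or `(w,v) ∈ A` and
`i = j + vol (w,v)`. -/
def lift (D : VoltageDigraph V m) : SimpleGraph (V × ZMod m) where
  Adj p q := ((p.1, q.1) ∈ D.A ∧ q.2 = p.2 + D.vol (p.1, q.1)) ∨
    ((q.1, p.1) ∈ D.A ∧ p.2 = q.2 + D.vol (q.1, p.1))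
  symm := ⟨fun p q h => h.symm⟩
  loopless := ⟨fun p h => h.elim (fun h' => D.irrefl p.1 h'.1) (fun h' => D.irrefl p.1 h'.1)⟩

/-- The signed voltage of a single step `v → w` of a walk in the underlying graph:
`vol (v,w)` if the step traverses the arc `(v,w)` from tail to head, and `- vol (w,v)`
otherwise (i.e. if it traverses the arc `(w,v)` from head to tail). -/
noncomputable def netStep (D : VoltageDigraph V m) (v w : V) : ZMod m := by
  classical exact if (v, w) ∈ D.A then D.vol (v, w) else - D.vol (w, v)

/-- The net voltage of a walk in the underlying graph: the sum of the signed voltages of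
its steps. -/
noncomputable def netVoltage (D : VoltageDigraph V m) {u v : V}
    (w : D.underlying.Walk u v) : ZMod m :=
  (w.darts.map (fun d => D.netStep d.fst d.snd)).sum

/-- The lift with pinned vertices: the lift graph augmented by one extra vertex for each
pinned vertex `p` (attached to `attach p ∈ V`), adjacent to `(attach p, i)` for every
`i : ZMod m`. -/
def pinnedLift (D : VoltageDigraph V m) {P : Type} (attach : P → V) :
    SimpleGraph ((V × ZMod m) ⊕ P) :=
  SimpleGraph.fromRel (fun a b =>
    (∃ u v : V × ZMod m, a = Sum.inl u ∧ b = Sum.inl v ∧ D.lift.Adj u v) ∨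
    (∃ (p : P) (u : V × ZMod m), a = Sum.inr p ∧ b = Sum.inl u ∧ attach p = u.1))

end VoltageDigraph

/-!
Write `s_r` for the net voltage of the first `r` steps of `W`. Consecutive lifted vertices
`(w_r, s_r)` are adjacent in the lift by definition of the net voltage of a step, and
`s_ℓ = 0`, so the lifted walk is closed. Two lifted vertices `(w_i, s_i) = (w_j, s_j)` with
`1 ≤ i < j ≤ ℓ` would give a repeated vertex `w_i = w_j` whose segment has net voltage
`s_j - s_i = 0`, which is excluded. Hence the lifted walk visits `ℓ ≥ 3` distinct vertices
before closing up, i.e. it is a cycle.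
-/

namespace SimpleGraph.Walk

variable {α : Type*} {G : SimpleGraph α}

theorem isPath_of_injOn_getVert {u v : α} {p : G.Walk u v}
    (h : Set.InjOn p.getVert {i | i ≤ p.length}) : p.IsPath := by
  rw [isPath_iff_injective_get_support]
  intro ⟨i, hi⟩ ⟨j, hj⟩ hij
  rw [length_support] at hi hj
  simp only [List.get_eq_getElem, ← getVert_eq_support_getElem _ (Nat.lt_succ_iff.mp hi),
    ← getVert_eq_support_getElem _ (Nat.lt_succ_iff.mp hj)] at hij
  exact Fin.ext (h (Nat.lt_succ_iff.mp hi) (Nat.lt_succ_iff.mp hj) hij)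

theorem isCycle_of_injOn_getVert {u : α} {p : G.Walk u u} (hlen : 3 ≤ p.length)
    (h : Set.InjOn p.getVert (Set.Icc 1 p.length)) : p.IsCycle := by
  refine isCycle_iff_isPath_tail_and_le_length.mpr ⟨isPath_of_injOn_getVert ?_, hlen⟩
  intro i hi j hj hij
  simp only [Set.mem_ofPred_eq, length_tail] at hi hj
  simp only [getVert_tail] at hij
  have := h ⟨by omega, by omega⟩ ⟨by omega, by omega⟩ hij
  omega

theorem exists_getVert_eq_of_adj {f : ℕ → α} :
    ∀ {n : ℕ}, (∀ i < n, G.Adj (f i) (f (i + 1))) →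
      ∃ p : G.Walk (f 0) (f n), p.length = n ∧ ∀ r ≤ n, p.getVert r = f r
  | 0, _ => ⟨nil, rfl, fun r hr => by simp [Nat.le_zero.mp hr]⟩
  | n + 1, h => by
    obtain ⟨p, hlen, hget⟩ := exists_getVert_eq_of_adj (n := n) fun i hi => h i (by omega)
    refine ⟨p.concat (h n (by omega)), by simp [hlen], fun r hr => ?_⟩
    rw [concat_eq_append, getVert_append', hlen]
    split_ifs with hrn
    · exact hget r hrn
    · obtain rfl : r = n + 1 := by omega
      simp

theorem exists_isCycle_getVert_eq {f : ℕ → α} {n : ℕ} (hn : 3 ≤ n)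
    (hadj : ∀ i < n, G.Adj (f i) (f (i + 1))) (hclosed : f n = f 0)
    (hinj : Set.InjOn f (Set.Icc 1 n)) :
    ∃ c : G.Walk (f 0) (f 0), c.IsCycle ∧ c.length = n ∧ ∀ r ≤ n, c.getVert r = f r := by
  obtain ⟨p, hlen, hget⟩ := exists_getVert_eq_of_adj hadj
  refine ⟨p.copy rfl hclosed, isCycle_of_injOn_getVert (by simpa [hlen]) ?_, by simpa, ?_⟩
  · intro i hi j hj hij
    simp only [length_copy, hlen, getVert_copy] at hi hj hij
    rw [hget i hi.2, hget j hj.2] at hij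
    exact hinj hi hj hij
  · simpa using hget

end SimpleGraph.Walk

namespace VoltageDigraph

variable {V : Type} {m : ℕ}

theorem lift_adj_add_netStep (D : VoltageDigraph V m) {v w : V} (h : D.underlying.Adj v w)
    (s : ZMod m) : D.lift.Adj (v, s) (w, s + D.netStep v w) := by
  by_cases hvw : (v, w) ∈ D.A
  · exact Or.inl ⟨hvw, by simp [netStep, hvw]⟩
  · refine Or.inr ⟨h.resolve_left hvw, ?_⟩
    simp [netStep, hvw]

end VoltageDigraph

theorem statement6_general {V : Type} {m : ℕ}
    (D : VoltageDigraph V m) (ℓ : ℕ) (hℓ : 3 ≤ ℓ) (w : ℕ → V)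
    (hclosed : w ℓ = w 0)
    (hadj : ∀ i < ℓ, D.underlying.Adj (w i) (w (i + 1)))
    (hnet : (∑ i ∈ Finset.range ℓ, D.netStep (w i) (w (i + 1))) = 0)
    (hseg : ∀ i j : ℕ, i < j → j ≤ ℓ → (i, j) ≠ (0, ℓ) → w i = w j →
      (∑ r ∈ Finset.Ico i j, D.netStep (w r) (w (r + 1))) ≠ 0) :
    ∃ c : D.lift.Walk (w 0, 0) (w 0, 0),
      c.IsCycle ∧ c.length = ℓ ∧
      ∀ r ≤ ℓ, c.getVert r = (w r, ∑ i ∈ Finset.range r, D.netStep (w i) (w (i + 1))) := by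
  set f : ℕ → V × ZMod m := fun r => (w r, ∑ i ∈ Finset.range r, D.netStep (w i) (w (i + 1)))
  have hliftAdj : ∀ i < ℓ, D.lift.Adj (f i) (f (i + 1)) := fun i hi => by
    simpa [f, Finset.sum_range_succ] using D.lift_adj_add_netStep (hadj i hi) _
  have hinj : Set.InjOn f (Set.Icc 1 ℓ) := by
    intro i hi j hj hij
    by_contra hne
    wlog hlt : i < j generalizing i j
    · exact this hj hi hij.symm (Ne.symm hne) (by omega)
    simp only [f, Prod.ext_iff] at hij
    refine hseg i j hlt hj.2 (ne_of_apply_ne Prod.fst (Nat.pos_iff_ne_zero.mp hi.1)) hij.1 ?_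
    rw [Finset.sum_Ico_eq_sub _ hlt.le, hij.2, sub_self]
  have hf0 : f 0 = (w 0, 0) := by simp [f]
  obtain ⟨c, hcyc, hlen, hget⟩ :=
    SimpleGraph.Walk.exists_isCycle_getVert_eq hℓ hliftAdj (by simp [f, hclosed, hnet]) hinj
  exact ⟨c.copy hf0 hf0, by simpa using hcyc, by simpa using hlen, by simpa using hget⟩

/-- a non-reversing closed walk in a voltage digraph whose net voltage is `0`
and none of whose proper sub-walks between repeated vertices has net voltage `0` lifts to
a cycle of length `ℓ` in the lift graph. -/
theorem statement6 {V : Type} [Fintype V] {m : ℕ} (hm : 1 ≤ m)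
    (D : VoltageDigraph V m) (ℓ : ℕ) (hℓ : 3 ≤ ℓ) (w : ℕ → V)
    (hclosed : w ℓ = w 0)
    (hadj : ∀ i < ℓ, D.underlying.Adj (w i) (w (i + 1)))
    (hnonrev : ∀ i, i + 2 ≤ ℓ → w (i + 2) ≠ w i)
    (hnonrevcyc : w 1 ≠ w (ℓ - 1))
    (hnet : (∑ i ∈ Finset.range ℓ, D.netStep (w i) (w (i + 1))) = 0)
    (hseg : ∀ i j : ℕ, i < j → j ≤ ℓ → (i, j) ≠ (0, ℓ) → w i = w j →
      (∑ r ∈ Finset.Ico i j, D.netStep (w r) (w (r + 1))) ≠ 0) :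
    ∃ c : D.lift.Walk (w 0, 0) (w 0, 0),
      c.IsCycle ∧ c.length = ℓ ∧
      ∀ r ≤ ℓ, c.getVert r = (w r, ∑ i ∈ Finset.range r, D.netStep (w i) (w (i + 1))) :=
  statement6_general D ℓ hℓ w hclosed hadj hnet hseg
end

section
/- Let m ≥ 2, and let p and q be two distinct pinned vertices attached to vertices x ∈ V and y ∈ V respectively. Suppose the underlying graph of the voltage digraph contains a path from x to y consisting of ℓ−2 steps through pairwise distinct vertices (ℓ ≥ 2; when ℓ = 2 the path is trivial and x = y). Then the lift with pinned vertices contains a cycle of length 2ℓ passing through both p and q. -/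
/-!
Lift the path into the sheets `0` and `1`. Projection to `V` is injective on the support of a
path and the two lifts differ by the sheet shift `+1`, which fixes no vertex as `m ≥ 2`; hence
the two lifts are vertex-disjoint paths of length `ℓ - 2`. The pinned vertex `p` is adjacent to
both of their starting points over `x` and `q` to both of their endpoints over `y`, so they close
up into a cycle of length `2 (ℓ - 2) + 4 = 2ℓ` through `p` and `q`.
-/

namespace VoltageDigraph

open SimpleGraph

variable {V : Type} {m : ℕ} (D : VoltageDigraph V m)

lemma lift_adj_netStep {u v : V} (h : D.underlying.Adj u v) (i : ZMod m) :
    D.lift.Adj (u, i) (v, i + D.netStep u v) := by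
  classical
  by_cases huv : (u, v) ∈ D.A
  · exact Or.inl ⟨huv, by simp [netStep, huv]⟩
  · exact Or.inr ⟨h.resolve_left huv, by simp [netStep, huv]⟩

lemma netVoltage_cons {u v w : V} (h : D.underlying.Adj u v) (p : D.underlying.Walk v w) :
    D.netVoltage (.cons h p) = D.netStep u v + D.netVoltage p := by
  simp [netVoltage]

noncomputable def liftWalk : ∀ {u v : V} (p : D.underlying.Walk u v) (i : ZMod m),
    D.lift.Walk (u, i) (v, i + D.netVoltage p)
  | _, _, .nil, i => Walk.nil.copy rfl (by simp [netVoltage])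
  | _, _, .cons h p, i =>
      (Walk.cons (D.lift_adj_netStep h i) (liftWalk p (i + D.netStep _ _))).copy rfl
        (by rw [netVoltage_cons, add_assoc])

variable {D}

@[simp]
lemma length_liftWalk {u v : V} (p : D.underlying.Walk u v) (i : ZMod m) :
    (D.liftWalk p i).length = p.length := by
  induction p generalizing i <;> simp [liftWalk, *]

lemma map_fst_support_liftWalk {u v : V} (p : D.underlying.Walk u v) (i : ZMod m) :
    (D.liftWalk p i).support.map Prod.fst = p.support := by
  induction p generalizing i <;> simp [liftWalk, *]

lemma support_liftWalk_add {u v : V} (p : D.underlying.Walk u v) (i j : ZMod m) :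
    (D.liftWalk p (i + j)).support = (D.liftWalk p i).support.map (fun z => (z.1, z.2 + j)) := by
  induction p generalizing i with
  | nil => simp [liftWalk]
  | @cons u v w h p ih =>
    simp only [liftWalk, Walk.support_copy, Walk.support_cons, List.map_cons, ← ih]
    rw [add_right_comm i j]

lemma nodup_map_fst_support_liftWalk {u v : V} {p : D.underlying.Walk u v} (hp : p.IsPath)
    (i : ZMod m) : ((D.liftWalk p i).support.map Prod.fst).Nodup :=
  map_fst_support_liftWalk p i ▸ hp.support_nodup

lemma isPath_liftWalk {u v : V} {p : D.underlying.Walk u v} (hp : p.IsPath) (i : ZMod m) :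
    (D.liftWalk p i).IsPath :=
  Walk.IsPath.mk' <| (nodup_map_fst_support_liftWalk hp i).of_map Prod.fst

lemma disjoint_support_liftWalk {u v : V} {p : D.underlying.Walk u v} (hp : p.IsPath)
    {i j : ZMod m} (hij : i ≠ j) :
    (D.liftWalk p i).support.Disjoint (D.liftWalk p j).support := by
  intro z hzi hzj
  rw [← add_sub_cancel i j, support_liftWalk_add] at hzj
  obtain ⟨a, hai, rfl⟩ := List.mem_map.1 hzj
  have hshift : (a.1, a.2 + (j - i)) = a :=
    List.inj_on_of_nodup_map (nodup_map_fst_support_liftWalk hp i) hzi hai rfl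
  exact hij (sub_eq_zero.1 (by simpa using congrArg Prod.snd hshift)).symm

section Pinned

variable {P : Type} (attach : P → V)

variable (D) in
def inlHom : D.lift →g D.pinnedLift attach where
  toFun := Sum.inl
  map_rel' {u v} h := by
    rw [pinnedLift, fromRel_adj]
    exact ⟨Sum.inl_injective.ne h.ne, .inl (.inl ⟨u, v, rfl, rfl, h⟩)⟩

@[simp]
lemma coe_inlHom : ⇑(D.inlHom attach) = Sum.inl := rfl

-- Stated with `D.inlHom attach u` rather than `.inl u` so that it fits `Walk.map (D.inlHom attach)`
-- in `pinnedWalk` up to syntactic equality.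
lemma pinnedLift_adj_inr_inlHom {r : P} (u : V × ZMod m) (h : attach r = u.1) :
    (D.pinnedLift attach).Adj (.inr r) (D.inlHom attach u) := by
  rw [coe_inlHom, pinnedLift, fromRel_adj]
  exact ⟨Sum.inr_ne_inl, .inl (.inr ⟨r, u, rfl, rfl, h⟩)⟩

variable (D) in
noncomputable def pinnedWalk {r s : P} (p : D.underlying.Walk (attach r) (attach s))
    (i : ZMod m) : (D.pinnedLift attach).Walk (.inr r) (.inr s) :=
  .cons (pinnedLift_adj_inr_inlHom attach (attach r, i) rfl)
    (((D.liftWalk p i).map (D.inlHom attach)).concat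
      (pinnedLift_adj_inr_inlHom attach (attach s, i + D.netVoltage p) rfl).symm)

variable {attach}

lemma support_pinnedWalk {r s : P} (p : D.underlying.Walk (attach r) (attach s)) (i : ZMod m) :
    (D.pinnedWalk attach p i).support =
      .inr r :: (D.liftWalk p i).support.map .inl ++ [.inr s] := by
  rw [pinnedWalk, Walk.support_cons, Walk.support_concat, Walk.support_map]
  simp

@[simp]
lemma length_pinnedWalk {r s : P} (p : D.underlying.Walk (attach r) (attach s)) (i : ZMod m) :
    (D.pinnedWalk attach p i).length = p.length + 2 := by
  rw [pinnedWalk, Walk.length_cons, Walk.length_concat, Walk.length_map, length_liftWalk]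

lemma isPath_pinnedWalk {r s : P} {p : D.underlying.Walk (attach r) (attach s)} (hp : p.IsPath)
    (hrs : r ≠ s) (i : ZMod m) : (D.pinnedWalk attach p i).IsPath := by
  rw [Walk.isPath_def, support_pinnedWalk]
  simpa [List.nodup_append, hrs] using (isPath_liftWalk hp i).support_nodup.map Sum.inl_injective

lemma disjoint_tail_support_pinnedWalk {r s : P} {p : D.underlying.Walk (attach r) (attach s)}
    (hp : p.IsPath) (hrs : r ≠ s) {i j : ZMod m} (hij : i ≠ j) :
    (D.pinnedWalk attach p i).support.tail.Disjoint
      (D.pinnedWalk attach p j).reverse.support.tail := by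
  simpa [support_pinnedWalk, hrs] using
    (disjoint_support_liftWalk hp hij).map Sum.inl_injective

end Pinned

end VoltageDigraph

theorem statement7_general {V P : Type} {m : ℕ} (hm : 2 ≤ m)
    (D : VoltageDigraph V m) (attach : P → V) (p q : P) (hpq : p ≠ q)
    (x y : V) (hx : attach p = x) (hy : attach q = y)
    (ℓ : ℕ) (hℓ : 2 ≤ ℓ)
    (pw : D.underlying.Walk x y) (hpath : pw.IsPath) (hlen : pw.length = ℓ - 2) :
    ∃ c : (D.pinnedLift attach).Walk (Sum.inr p) (Sum.inr p),
      c.IsCycle ∧ c.length = 2 * ℓ ∧ (Sum.inr q : (V × ZMod m) ⊕ P) ∈ c.support := by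
  subst hx hy
  have : Fact (1 < m) := ⟨hm⟩
  refine ⟨(D.pinnedWalk attach pw 0).append (D.pinnedWalk attach pw 1).reverse, ?_, ?_, ?_⟩
  · exact (VoltageDigraph.isPath_pinnedWalk hpath hpq 0).isCycle_append
      (VoltageDigraph.isPath_pinnedWalk hpath hpq 1).reverse
      (VoltageDigraph.disjoint_tail_support_pinnedWalk hpath hpq zero_ne_one) (by simp)
  · simp only [SimpleGraph.Walk.length_append, SimpleGraph.Walk.length_reverse,
      VoltageDigraph.length_pinnedWalk]
    omega
  · simp [VoltageDigraph.support_pinnedWalk]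

/-- if `p` and `q` are distinct pinned vertices attached to `x` and `y`, and
the underlying graph contains a path of `ℓ - 2` steps from `x` to `y` (with `ℓ ≥ 2`, the
trivial path forcing `x = y` when `ℓ = 2`), then the lift with pinned vertices contains a
cycle of length `2ℓ` passing through both pinned vertices. -/
theorem statement7 {V P : Type} [Fintype V] [Fintype P] {m : ℕ} (hm : 2 ≤ m)
    (D : VoltageDigraph V m) (attach : P → V) (p q : P) (hpq : p ≠ q)
    (x y : V) (hx : attach p = x) (hy : attach q = y)
    (ℓ : ℕ) (hℓ : 2 ≤ ℓ)
    (pw : D.underlying.Walk x y) (hpath : pw.IsPath) (hlen : pw.length = ℓ - 2) :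
    ∃ c : (D.pinnedLift attach).Walk (Sum.inr p) (Sum.inr p),
      c.IsCycle ∧ c.length = 2 * ℓ ∧ (Sum.inr q : (V × ZMod m) ⊕ P) ∈ c.support :=
  statement7_general hm D attach p q hpq x y hx hy ℓ hℓ pw hpath hlen
end

section
/- For all integers t ≥ 1 and m ≥ 2, the girth of the graph (T_{4t+2}; m) equals 4t+2. -/
/-- `BT t` : bit strings of length at most `2t - 1` that do not have `0^t` as a prefix. -/
def BT (t : ℕ) : Type :=
  {l : List Bool // l.length ≤ 2 * t - 1 ∧ ¬ List.replicate t false <+: l}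

/-- Vertex set of `(T_{4t+2}; m)` : the two pinned vertices `x* = Sum.inl true`,
`y* = Sum.inl false`, together with `{x, y} × B_t × ZMod m`, where the side `x` is
encoded by `true` and `y` by `false`. -/
def TVert (t m : ℕ) : Type := Bool ⊕ (Bool × BT t × ZMod m)

/-- The edge relation of `(T_{4t+2}; m)`: the pinned vertex of each side is joined to the
root `(s, ε, i)` for every `i`; each vertex `(s, b, i)` is joined to its children
`(s, bc, i)`; and `(x, a, i)` is joined to `(y, a, i)` where `a = 0^{t-1}`. -/
def TRel (t m : ℕ) : TVert t m → TVert t m → Prop := fun a b =>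
  (∃ (s : Bool) (l : BT t) (i : ZMod m),
      a = Sum.inl s ∧ b = Sum.inr (s, l, i) ∧ l.val = []) ∨
  (∃ (s : Bool) (l l' : BT t) (i : ZMod m) (c : Bool),
      a = Sum.inr (s, l, i) ∧ b = Sum.inr (s, l', i) ∧ l'.val = l.val ++ [c]) ∨
  (∃ (l l' : BT t) (i : ZMod m),
      a = Sum.inr (true, l, i) ∧ b = Sum.inr (false, l', i) ∧
      l.val = List.replicate (t - 1) false ∧ l'.val = List.replicate (t - 1) false)

/-- The graph `(T_{4t+2}; m)`. -/
def Tgraph (t m : ℕ) : SimpleGraph (TVert t m) := SimpleGraph.fromRel (TRel t m)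

/-!
Deleting `y*` leaves a tree rooted at `x*`: the copy `i` of the `y`-tree hangs from `(x, a, i)`
through the edge `(x, a, i) (y, a, i)`. By the symmetry exchanging the two sides, deleting `x*`
also leaves a tree, so every cycle passes through both `x*` and `y*`. The level
`x* ↦ 0, (x, b, i) ↦ |b| + 1, (y, b, i) ↦ 2t - |b|, y* ↦ 2t + 1` changes by one along every edge,
so both arcs of the cycle between `x*` and `y*` have length at least `2t + 1`. Conversely, the
paths `x*, (x, 0^k, i), (y, 0^k, i), y*` of length `2t + 1` through two different copies `i ≠ j`
close up into a cycle of length `4t + 2`.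
-/

namespace SimpleGraph

variable {V : Type*} {G : SimpleGraph V}

theorem IsAcyclic.of_parent {α : Type*} [LinearOrder α] (par : V → V) (f : V → α)
    (hadj : ∀ ⦃u v⦄, G.Adj u v → u = par v ∨ v = par u)
    (hlt : ∀ v, par v ≠ v → f (par v) < f v) : G.IsAcyclic := by
  classical
  intro v c hc
  obtain ⟨u, hu, hmax⟩ := c.support.toFinset.exists_max_image f ⟨v, by simp⟩
  rw [List.mem_toFinset] at hu
  have hc' : (c.rotate u hu).IsCycle := hc.rotate hu
  -- a neighbour of the `f`-maximal vertex `u` of the cycle cannot be a child of `u`, so both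
  -- neighbours of `u` on the cycle are `par u`
  have hparent : ∀ w ∈ (c.rotate u hu).support, G.Adj u w → w = par u := by
    intro w hw huw
    refine (hadj huw).resolve_left fun hu_eq => ?_
    have := hlt w (hu_eq ▸ huw.ne)
    rw [← hu_eq] at this
    exact (hmax w (by simpa using hw)).not_gt this
  exact hc'.snd_ne_penultimate <|
    (hparent _ (Walk.getVert_mem_support _ _) (Walk.adj_snd hc'.not_nil)).trans
      (hparent _ (Walk.getVert_mem_support _ _) (Walk.adj_penultimate hc'.not_nil).symm).symm

namespace Walk

theorem abs_sub_le_length (f : V → ℤ) (hf : ∀ ⦃u v⦄, G.Adj u v → |f u - f v| ≤ 1) :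
    ∀ {u v : V} (p : G.Walk u v), |f u - f v| ≤ p.length
  | _, _, nil => by simp
  | u, v, cons (v := w) huw p => by
    calc |f u - f v| ≤ |f u - f w| + |f w - f v| := abs_sub_le _ _ _
      _ ≤ 1 + p.length := add_le_add (hf huw) (abs_sub_le_length f hf p)
      _ = (cons huw p).length := by simp [add_comm]

theorem two_mul_abs_sub_le_length (f : V → ℤ) (hf : ∀ ⦃u v⦄, G.Adj u v → |f u - f v| ≤ 1)
    {a u v : V} {c : G.Walk a a} (hu : u ∈ c.support) (hv : v ∈ c.support) :
    2 * |f u - f v| ≤ c.length := by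
  classical
  have hv' : v ∈ (c.rotate u hu).support := (c.mem_support_rotate_iff _ _).mpr hv
  have hsplit := congrArg length ((c.rotate u hu).take_spec hv')
  rw [length_append, length_rotate] at hsplit
  have h₁ := abs_sub_le_length f hf ((c.rotate u hu).takeUntil v hv')
  have h₂ := abs_sub_le_length f hf ((c.rotate u hu).dropUntil v hv')
  rw [abs_sub_comm] at h₂
  omega

end Walk

theorem Walk.IsCycle.mem_support_of_isAcyclic_deleteIncidenceSet {z a : V}
    (hz : (G.deleteIncidenceSet z).IsAcyclic) {c : G.Walk a a} (hc : c.IsCycle) :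
    z ∈ c.support := by
  by_contra hzc
  refine hz _ (hc.transfer fun e he => ?_)
  induction e with
  | h u v =>
    exact (deleteIncidenceSet_adj ..).mpr ⟨c.adj_of_mem_edges he,
      fun h => hzc (h ▸ c.fst_mem_support_of_mem_edges he),
      fun h => hzc (h ▸ c.snd_mem_support_of_mem_edges he)⟩

theorem exists_walk_support_eq_map_range (f : ℕ → V) :
    ∀ n, (∀ k < n, G.Adj (f k) (f (k + 1))) →
      ∃ p : G.Walk (f 0) (f n), p.support = (List.range (n + 1)).map f
  | 0, _ => ⟨.nil, rfl⟩
  | n + 1, hf => by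
    obtain ⟨p, hp⟩ := exists_walk_support_eq_map_range f n fun k hk => hf k (by omega)
    refine ⟨p.concat (hf n (by omega)), ?_⟩
    rw [Walk.support_concat, hp, List.range_succ (n := n + 1), List.map_append]
    rfl

end SimpleGraph

open SimpleGraph Sum List

-- lets `simp` see vertices as elements of a sum type
attribute [reducible] TVert

namespace BT

variable {t : ℕ}

def dropLast (b : BT t) : BT t :=
  ⟨b.1.dropLast, length_dropLast ▸ (Nat.sub_le _ _).trans b.2.1,
    fun h => b.2.2 (h.trans (dropLast_prefix _))⟩

@[simp] lemma val_dropLast (b : BT t) : b.dropLast.1 = b.1.dropLast := rfl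

def zeros (j : ℕ) (hj : j < t) : BT t :=
  ⟨replicate j false, by rw [length_replicate]; omega,
    fun h => by have := h.length_le; simp only [length_replicate] at this; omega⟩

@[simp] lemma val_zeros (j : ℕ) (hj : j < t) : (zeros j hj).1 = replicate j false := rfl

lemma length_lt_of_true_not_mem (b : BT t) (hb : true ∉ b.1) : b.1.length < t := by
  by_contra! htb
  have hrep : b.1 = replicate b.1.length false := eq_replicate_length.mpr (by simpa using hb)
  refine b.2.2 ?_
  rw [hrep]
  exact ⟨replicate (b.1.length - t) false, by rw [← replicate_add, Nat.add_sub_cancel' htb]⟩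

end BT

namespace Tgraph

variable {t m : ℕ}

lemma adj_iff {u v : TVert t m} :
    (Tgraph t m).Adj u v ↔ u ≠ v ∧ (TRel t m u v ∨ TRel t m v u) :=
  fromRel_adj _ _ _

def level (t m : ℕ) : TVert t m → ℤ
  | inl true => 0
  | inl false => 2 * t + 1
  | inr (true, b, _) => b.1.length + 1
  | inr (false, b, _) => 2 * t - b.1.length

lemma abs_level_sub_le_one {u v : TVert t m} (h : (Tgraph t m).Adj u v) :
    |level t m u - level t m v| ≤ 1 := by
  suffices key : ∀ u v, TRel t m u v → |level t m u - level t m v| ≤ 1 by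
    rcases (adj_iff.mp h).2 with h | h
    · exact key u v h
    · exact abs_sub_comm (level t m u) _ ▸ key v u h
  rintro _ _ (⟨s, l, i, rfl, rfl, hl⟩ | ⟨s, l, l', i, c, rfl, rfl, hl'⟩ |
    ⟨l, l', i, rfl, rfl, hl, hl'⟩)
  · cases s <;> simp [level, hl]
  · cases s <;> simp [level, hl']
  · simp only [level, hl, hl', length_replicate, abs_le]
    omega

-- The tree structure of `Tgraph t m` without `y*`: on the `y` side the strings `0^k` point
-- towards `a = 0^(t-1)`, whose parent is `(x, a, i)`; all other strings point to their prefix.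
def parent : TVert t m → TVert t m
  | inl s => inl s
  | inr (true, b, i) => if b.1 = [] then inl true else inr (true, b.dropLast, i)
  | inr (false, b, i) =>
      if true ∈ b.1 then inr (false, b.dropLast, i)
      else if h : b.1.length + 1 < t then inr (false, BT.zeros (b.1.length + 1) h, i)
      else inr (true, b, i)

def height (t m : ℕ) : TVert t m → ℤ
  | inl _ => 0
  | inr (true, b, _) => b.1.length + 1
  | inr (false, b, _) => if true ∈ b.1 then 2 * t + b.1.length else 2 * t - b.1.length

lemma height_parent_lt (v : TVert t m) (hv : parent v ≠ v) :
    height t m (parent v) < height t m v := by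
  rcases v with s | ⟨_ | _, b, i⟩
  · exact absurd rfl hv
  · by_cases hb : true ∈ b.1
    · have : 0 < b.1.length := length_pos_of_mem hb
      simp only [parent, hb, ↓reduceIte, height, BT.val_dropLast, length_dropLast]
      split_ifs <;> omega
    · have hlt := b.length_lt_of_true_not_mem hb
      by_cases hlen : b.1.length + 1 < t
      · simp [parent, hb, hlen, height]
      · simp only [height, parent, hb, ↓reduceIte, hlen, ↓reduceDIte]
        omega
  · by_cases hb : b.1 = []
    · simp [parent, hb, height]
    · have : 0 < b.1.length := length_pos_iff.mpr hb
      simp only [height, parent, hb, ↓reduceIte, BT.val_dropLast, length_dropLast]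
      omega

lemma eq_parent_or_eq_parent {u v : TVert t m} (hu : u ≠ inl false) (h : TRel t m u v) :
    u = parent v ∨ v = parent u := by
  rcases h with ⟨s, l, i, rfl, rfl, hl⟩ | ⟨s, l, l', i, c, rfl, rfl, hl'⟩ |
    ⟨l, l', i, rfl, rfl, hl, hl'⟩
  · cases s
    · exact absurd rfl hu
    · left
      simp only [parent, hl, ↓reduceIte]
  · cases s
    · by_cases hc : true ∈ l'.1
      · left
        simp only [parent, hc, ↓reduceIte]
        congr
        exact Subtype.ext (by simp [hl'])
      · right
        rw [hl', mem_append, not_or] at hc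
        have hlen : l.1.length + 1 < t := by
          simpa [hl'] using l'.length_lt_of_true_not_mem (by simp [hl', hc])
        simp only [parent, hc.1, hlen, ↓reduceIte, ↓reduceDIte]
        congr
        refine Subtype.ext ?_
        have hl_rep : l.1 = replicate l.1.length false :=
          eq_replicate_length.mpr (by simpa using hc.1)
        simp only [BT.val_zeros, hl', replicate_succ', ← hl_rep]
        simpa using hc.2
    · left
      have : l'.1 ≠ [] := by simp [hl']
      simp only [parent, this, ↓reduceIte]
      congr
      exact Subtype.ext (by simp [hl'])
  · left
    have hlen : ¬ l'.1.length + 1 < t := by rw [hl', length_replicate]; omega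
    have hnot : true ∉ l'.1 := by simp [hl']
    simp only [parent, hnot, hlen, ↓reduceIte, ↓reduceDIte]
    congr
    exact Subtype.ext (hl.trans hl'.symm)

lemma isAcyclic_deleteIncidenceSet : ((Tgraph t m).deleteIncidenceSet (inl false)).IsAcyclic := by
  refine IsAcyclic.of_parent parent (height t m) (fun u v huv => ?_) height_parent_lt
  obtain ⟨huv, hu, hv⟩ := (deleteIncidenceSet_adj ..).mp huv
  rcases (adj_iff.mp huv).2 with h | h
  · exact eq_parent_or_eq_parent hu h
  · exact (eq_parent_or_eq_parent hv h).symm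

def swapSides : TVert t m → TVert t m
  | inl s => inl !s
  | inr (s, b, i) => inr (!s, b, i)

lemma swapSides_involutive : Function.Involutive (swapSides : TVert t m → TVert t m) := by
  rintro (s | ⟨s, b, i⟩) <;> simp only [swapSides, Bool.not_not]

lemma swapSides_trel {u v : TVert t m} (h : TRel t m u v) :
    TRel t m (swapSides u) (swapSides v) ∨ TRel t m (swapSides v) (swapSides u) := by
  rcases h with ⟨s, l, i, rfl, rfl, hl⟩ | ⟨s, l, l', i, c, rfl, rfl, hl'⟩ |
    ⟨l, l', i, rfl, rfl, hl, hl'⟩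
  · exact Or.inl (Or.inl ⟨!s, l, i, rfl, rfl, hl⟩)
  · exact Or.inl (Or.inr (Or.inl ⟨!s, l, l', i, c, rfl, rfl, hl'⟩))
  · exact Or.inr (Or.inr (Or.inr ⟨l', l, i, rfl, rfl, hl', hl⟩))

def swapSidesHom : Tgraph t m →g Tgraph t m where
  toFun := swapSides
  map_rel' h := by
    obtain ⟨hne, hrel⟩ := adj_iff.mp h
    refine adj_iff.mpr ⟨swapSides_involutive.injective.ne hne, ?_⟩
    rcases hrel with h | h
    · exact swapSides_trel h
    · exact (swapSides_trel h).symm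

lemma inl_false_mem_support {a : TVert t m} {c : (Tgraph t m).Walk a a} (hc : c.IsCycle) :
    inl false ∈ c.support :=
  hc.mem_support_of_isAcyclic_deleteIncidenceSet isAcyclic_deleteIncidenceSet

lemma inl_true_mem_support {a : TVert t m} {c : (Tgraph t m).Walk a a} (hc : c.IsCycle) :
    inl true ∈ c.support := by
  have := inl_false_mem_support (hc.map (f := swapSidesHom) swapSides_involutive.injective)
  obtain ⟨v, hv, hswap⟩ := List.mem_map.mp (Walk.support_map _ c ▸ this)
  rwa [← swapSides_involutive v, show swapSides v = inl false from hswap] at hv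

lemma four_mul_add_two_le_length {a : TVert t m} {c : (Tgraph t m).Walk a a} (hc : c.IsCycle) :
    4 * t + 2 ≤ c.length := by
  have := Walk.two_mul_abs_sub_le_length (level t m) (fun _ _ => abs_level_sub_le_one)
    (inl_true_mem_support hc) (inl_false_mem_support hc)
  simp only [level, zero_sub, abs_neg] at this
  rw [abs_of_nonneg (by positivity)] at this
  omega

def spine (t : ℕ) (i : ZMod m) (k : ℕ) : TVert t m :=
  if h₀ : k = 0 then inl true
  else if h : k ≤ t then inr (true, BT.zeros (k - 1) (by omega), i)
  else if h' : k ≤ 2 * t then inr (false, BT.zeros (2 * t - k) (by omega), i)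
  else inl false

section spine

variable (i : ZMod m) {k : ℕ}

lemma spine_zero : spine t i 0 = inl true := rfl

lemma spine_of_le (hk₀ : k ≠ 0) (hk : k ≤ t) :
    spine t i k = inr (true, BT.zeros (k - 1) (by omega), i) := by
  simp [spine, hk₀, hk]

lemma spine_of_lt_of_le (hk₀ : t < k) (hk : k ≤ 2 * t) :
    spine t i k = inr (false, BT.zeros (2 * t - k) (by omega), i) := by
  simp [spine, hk, show k ≠ 0 by omega, show ¬ k ≤ t by omega]

lemma spine_of_lt (hk : 2 * t < k) : spine t i k = inl false := by
  simp [spine, show k ≠ 0 by omega, show ¬ k ≤ t by omega, show ¬ k ≤ 2 * t by omega]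

lemma level_spine (hk : k ≤ 2 * t + 1) : level t m (spine t i k) = k := by
  rcases Nat.eq_zero_or_pos k with rfl | hk₀
  · rfl
  rcases Nat.lt_or_ge t k with hkt | hkt
  · rcases Nat.lt_or_ge (2 * t) k with hk2 | hk2
    · rw [spine_of_lt i hk2, level]
      omega
    · simp only [spine_of_lt_of_le i hkt hk2, level, BT.val_zeros, length_replicate]
      omega
  · simp only [spine_of_le i (by omega) hkt, level, BT.val_zeros, length_replicate]
    omega

lemma spine_adj (ht : 1 ≤ t) (hk : k < 2 * t + 1) :
    (Tgraph t m).Adj (spine t i k) (spine t i (k + 1)) := by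
  refine adj_iff.mpr ⟨ne_of_apply_ne (level t m) ?_, ?_⟩
  · rw [level_spine i (by omega), level_spine i (by omega)]
    omega
  rcases Nat.lt_or_ge k t with hkt | hkt
  · rw [spine_of_le i (by omega) (by omega : k + 1 ≤ t)]
    rcases Nat.eq_zero_or_pos k with rfl | hk0
    · exact Or.inl (Or.inl ⟨true, _, i, rfl, rfl, rfl⟩)
    · rw [spine_of_le i (by omega) hkt.le]
      refine Or.inl (Or.inr (Or.inl ⟨true, _, _, i, false, rfl, rfl, ?_⟩))
      simp [← replicate_succ', show k - 1 + 1 = k by omega]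
  rcases hkt.eq_or_lt with rfl | hkt
  · rw [spine_of_le i (by omega) le_rfl, spine_of_lt_of_le i (by omega) (by omega)]
    refine Or.inl (Or.inr (Or.inr ⟨_, _, i, rfl, rfl, rfl, ?_⟩))
    simp [show 2 * t - (t + 1) = t - 1 by omega]
  rcases (show k ≤ 2 * t by omega).eq_or_lt with rfl | hk2
  · rw [spine_of_lt_of_le i hkt le_rfl, spine_of_lt i (by omega)]
    exact Or.inr (Or.inl ⟨false, _, i, rfl, rfl, by simp⟩)
  · rw [spine_of_lt_of_le i hkt hk2.le, spine_of_lt_of_le i (by omega) hk2]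
    refine Or.inr (Or.inr (Or.inl ⟨false, _, _, i, false, rfl, rfl, ?_⟩))
    simp [← replicate_succ', show 2 * t - (k + 1) + 1 = 2 * t - k by omega]

lemma spine_ne_spine {j : ZMod m} (hij : i ≠ j) (hk₀ : k ≠ 0) (hk : k ≤ 2 * t) :
    spine t i k ≠ spine t j k := by
  rcases Nat.lt_or_ge t k with hkt | hkt
  · simp [spine_of_lt_of_le _ hkt hk, hij]
  · simp [spine_of_le _ hk₀ hkt, hij]

end spine

lemma exists_isPath_support_spine (ht : 1 ≤ t) (i : ZMod m) :
    ∃ p : (Tgraph t m).Walk (inl true) (inl false),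
      p.IsPath ∧ p.support = (range (2 * t + 2)).map (spine t i) := by
  obtain ⟨p, hp⟩ := exists_walk_support_eq_map_range (G := Tgraph t m) (spine t i) (2 * t + 1)
    fun k hk => spine_adj i ht hk
  refine ⟨p.copy (spine_zero i) (spine_of_lt i (by omega)), ?_, by rw [Walk.support_copy, hp]⟩
  rw [Walk.isPath_copy, Walk.isPath_def, hp]
  refine Nodup.map_on (fun k hk k' hk' h => ?_) nodup_range
  rw [mem_range] at hk hk'
  have := congrArg (level t m) h
  rwa [level_spine i (by omega), level_spine i (by omega), Nat.cast_inj] at this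

lemma exists_isCycle_length (ht : 1 ≤ t) {i j : ZMod m} (hij : i ≠ j) :
    ∃ c : (Tgraph t m).Walk (inl true) (inl true), c.IsCycle ∧ c.length = 4 * t + 2 := by
  obtain ⟨p, hp, hps⟩ := exists_isPath_support_spine ht i
  obtain ⟨q, hq, hqs⟩ := exists_isPath_support_spine ht j
  have hp_len : p.length = 2 * t + 1 := by
    have := p.length_support; rw [hps] at this; simpa using this.symm
  have hq_len : q.length = 2 * t + 1 := by
    have := q.length_support; rw [hqs] at this; simpa using this.symm
  refine ⟨p.append q.reverse, hp.isCycle_append hq.reverse ?_ (by omega),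
    by rw [Walk.length_append, Walk.length_reverse]; omega⟩
  have htail : p.support.tail = (range (2 * t + 1)).map (spine t i ∘ Nat.succ) := by
    rw [hps, range_succ_eq_map, map_cons, tail_cons, List.map_map]
  have hdrop : q.support.dropLast = (range (2 * t + 1)).map (spine t j) := by
    rw [hqs, range_succ (n := 2 * t + 1), map_append, map_singleton, dropLast_concat]
  rw [Walk.support_reverse, tail_reverse, htail, hdrop]
  refine disjoint_left.mpr fun a ha hb => ?_
  simp only [mem_map, mem_range, mem_reverse, Function.comp_apply] at ha hb
  obtain ⟨k, hk, rfl⟩ := ha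
  obtain ⟨k', hk', hk'a⟩ := hb
  have := congrArg (level t m) hk'a
  rw [level_spine j (by omega), level_spine i (by omega), Nat.cast_inj] at this
  subst this
  exact spine_ne_spine i hij (by omega) (by omega) hk'a.symm

end Tgraph

/-- for all integers `t ≥ 1` and `m ≥ 2`, the girth of `(T_{4t+2}; m)`
equals `4t + 2`. -/
theorem statement9 (t m : ℕ) (ht : 1 ≤ t) (hm : 2 ≤ m) :
    (Tgraph t m).egirth = ((4 * t + 2 : ℕ) : ℕ∞) := by
  have : Nontrivial (ZMod m) := ZMod.nontrivial_iff.mpr (by omega)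
  obtain ⟨c, hc, hlen⟩ := Tgraph.exists_isCycle_length ht (zero_ne_one (α := ZMod m))
  refine le_antisymm (hlen ▸ egirth_le_length hc) (le_egirth.mpr fun _ c hc => ?_)
  exact_mod_cast Tgraph.four_mul_add_two_le_length hc
end

section
/- For all integers t ≥ 1 and m ≥ 1, every simple graph H obtained from (T_{4t+2}; m) by adding an arbitrary set of extra edges, each of the form {(x, b, i), (y, c, j)} where b and c are bit strings in B_t of length exactly 2t−1, is bipartite (i.e. 2-colorable). -/
def tcol {t m : ℕ} : TVert t m → ZMod 2
  | Sum.inl s => if s then 1 else 0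
  | Sum.inr (s, l, _) => (l.val.length : ZMod 2) + (if s then 0 else 1)

lemma zmod2_ne : ∀ x : ZMod 2, x ≠ x + 1 := by decide

lemma tcol_ne {t m : ℕ} (a b : TVert t m) (h : TRel t m a b) : tcol a ≠ tcol b := by
  rcases h with ⟨s, l, i, rfl, rfl, hl⟩ | ⟨s, l, l', i, c, rfl, rfl, hl⟩ |
    ⟨l, l', i, rfl, rfl, hl, hl'⟩
  · cases s <;> simp [tcol, hl]
  · have hlen : (l'.val.length : ZMod 2) = l.val.length + 1 := by
      rw [hl]; push_cast [List.length_append, List.length_singleton]; ring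
    simp only [tcol, hlen]
    intro h
    exact zmod2_ne ((l.val.length : ZMod 2) + if s then 0 else 1) (by linear_combination h)
  · simp only [tcol, hl, hl', if_true, if_false, Bool.false_eq_true]
    intro h
    exact zmod2_ne ((List.replicate (t-1) false).length + 0 : ZMod 2) (by linear_combination h)

/-- for all integers `t ≥ 1` and `m ≥ 1`, every simple graph obtained from
`(T_{4t+2}; m)` by adding an arbitrary set of extra edges, each of the form
`{(x, b, i), (y, c, j)}` with `b, c ∈ B_t` of length exactly `2t - 1`, is bipartite. -/
theorem statement11 (t m : ℕ) (ht : 1 ≤ t) (hm : 1 ≤ m)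
    (H : SimpleGraph (TVert t m)) (hle : Tgraph t m ≤ H)
    (hextra : ∀ a b : TVert t m, H.Adj a b → (Tgraph t m).Adj a b ∨
      ∃ (bx cy : BT t) (i j : ZMod m),
        bx.val.length = 2 * t - 1 ∧ cy.val.length = 2 * t - 1 ∧
        ((a = Sum.inr (true, bx, i) ∧ b = Sum.inr (false, cy, j)) ∨
         (b = Sum.inr (true, bx, i) ∧ a = Sum.inr (false, cy, j)))) :
    H.Colorable 2 := by
  have C : H.Coloring (ZMod 2) := by
    refine SimpleGraph.Coloring.mk tcol ?_
    intro a b hab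
    rcases hextra a b hab with hT | ⟨bx, cy, i, j, hbx, hcy, ⟨rfl, rfl⟩ | ⟨rfl, rfl⟩⟩
    · rcases hT with ⟨hne, h | h⟩
      · exact tcol_ne a b h
      · exact (tcol_ne b a h).symm
    · simp only [tcol, hbx, hcy, if_true, if_false, Bool.false_eq_true]
      intro h
      exact zmod2_ne (((2*t-1 : ℕ) : ZMod 2) + 0) (by linear_combination h)
    · simp only [tcol, hbx, hcy, if_true, if_false, Bool.false_eq_true]
      intro h
      exact zmod2_ne (((2*t-1 : ℕ) : ZMod 2) + 0) (by linear_combination h.symm)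
  exact (ZMod.card 2) ▸ C.colorable
end

section
/- Let m ≥ 3 and α, β ∈ ZMod m with α ≠ 0, β ≠ 0, α ≠ β and 2(α−β) ≠ 0. Then the graph (G_6; m) has girth exactly 6; moreover the vertices x* and y* have degree m and each of the remaining 4m vertices has degree 3, so (G_6; m) is a (3,m;6)-graph on 4m+2 vertices. -/
/-- The four non-pinned base vertices of the voltage graph `G_6`. -/
inductive W6 : Type
  | x | y | x0 | y0

/-- Vertex set of `(G_6; m)`: the pinned vertices `x* = Sum.inl true`,
`y* = Sum.inl false`, together with `{x, y, x₀, y₀} × ZMod m`. -/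
def V6 (m : ℕ) : Type := Bool ⊕ (W6 × ZMod m)

/-- The edge relation of `(G_6; m)`: for every `i : ZMod m`, `x*` is adjacent to `(x,i)`,
`y*` to `(y,i)`, `(x,i)` to `(y,i)`, `(x,i)` to `(x₀,i)`, `(y,i)` to `(y₀,i)`, and
`(x₀,i)` to `(y₀,i+α)` and to `(y₀,i+β)`. -/
def rel6 (m : ℕ) (α β : ZMod m) : V6 m → V6 m → Prop := fun a b =>
  (∃ i : ZMod m, a = Sum.inl true ∧ b = Sum.inr (W6.x, i)) ∨
  (∃ i : ZMod m, a = Sum.inl false ∧ b = Sum.inr (W6.y, i)) ∨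
  (∃ i : ZMod m, a = Sum.inr (W6.x, i) ∧ b = Sum.inr (W6.y, i)) ∨
  (∃ i : ZMod m, a = Sum.inr (W6.x, i) ∧ b = Sum.inr (W6.x0, i)) ∨
  (∃ i : ZMod m, a = Sum.inr (W6.y, i) ∧ b = Sum.inr (W6.y0, i)) ∨
  (∃ i : ZMod m, a = Sum.inr (W6.x0, i) ∧ b = Sum.inr (W6.y0, i + α)) ∨
  (∃ i : ZMod m, a = Sum.inr (W6.x0, i) ∧ b = Sum.inr (W6.y0, i + β))

/-- The graph `(G_6; m)` with voltages `α` and `β` on the two arcs from `x₀` to `y₀`. -/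
def G6 (m : ℕ) (α β : ZMod m) : SimpleGraph (V6 m) := SimpleGraph.fromRel (rel6 m α β)

/-!
Colouring `x*`, `y`, `x₀` against `y*`, `x`, `y₀` shows that `(G_6; m)` is bipartite, so all of
its cycles have even length. A case analysis shows that two distinct vertices never have two
common neighbours, which rules out 4-cycles, and `x* (x,0) (y,0) y* (y,1) (x,1)` is a 6-cycle.
-/

attribute [reducible] V6

namespace SimpleGraph

variable {V : Type*} {G : SimpleGraph V}

lemma six_le_egirth_of_coloring_bool (C : G.Coloring Bool)
    (hG : ∀ ⦃a b c d⦄, a ≠ c → G.Adj a b → G.Adj b c → G.Adj a d → G.Adj d c → b = d) :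
    6 ≤ G.egirth := by
  refine le_egirth.mpr fun v w hw => ?_
  have heven : Even w.length := (C.even_length_iff_congr w).mpr Iff.rfl
  have hne4 : w.length ≠ 4 := by
    intro h4
    have hadj (i : ℕ) (hi : i < 4) := w.adj_getVert_succ (h4 ▸ hi)
    have hclose : w.getVert 4 = w.getVert 0 := by
      rw [← h4, Walk.getVert_length, Walk.getVert_zero]
    refine hw.getVert_sub_one_ne_getVert_add_one (i := 2) (by omega) <| hG
      (hw.getVert_sub_one_ne_getVert_add_one (i := 1) (by omega)) (hadj 0 (by omega))
      (hadj 1 (by omega)) ?_ (hadj 2 (by omega)).symm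
    simpa [hclose] using (hadj 3 (by omega)).symm
  have := hw.three_le_length
  obtain ⟨k, hk⟩ := heven
  exact_mod_cast (by omega : 6 ≤ w.length)

end SimpleGraph

def W6.equivFin : W6 ≃ Fin 4 where
  toFun
    | .x => 0
    | .y => 1
    | .x0 => 2
    | .y0 => 3
  invFun
    | 0 => .x
    | 1 => .y
    | 2 => .x0
    | 3 => .y0
  left_inv u := by cases u <;> rfl
  right_inv i := by fin_cases i <;> rfl

namespace V6

lemma card_eq (m : ℕ) [NeZero m] : Nat.card (V6 m) = 4 * m + 2 := by
  have : Finite W6 := .of_equiv _ W6.equivFin.symm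
  rw [Nat.card_sum, Nat.card_prod, Nat.card_congr W6.equivFin, Nat.card_fin, Nat.card_zmod,
    Nat.card_eq_fintype_card (α := Bool), Fintype.card_bool, add_comm]

lemma ncard_range_inr {m : ℕ} (u : W6) :
    (Set.range fun i : ZMod m => (Sum.inr (u, i) : V6 m)).ncard = m := by
  rw [Set.ncard_range_of_injective fun i j h => by simpa using h, Nat.card_zmod]

end V6

namespace G6

variable {m : ℕ} {α β : ZMod m}

open SimpleGraph W6

lemma adj_iff {a b : V6 m} : (G6 m α β).Adj a b ↔ rel6 m α β a b ∨ rel6 m α β b a := by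
  rw [G6, fromRel_adj, and_iff_right_iff_imp]
  rintro (h | h) rfl <;> grind [rel6]

lemma adj_inl_true_iff {v : V6 m} : (G6 m α β).Adj (.inl true) v ↔ ∃ i, v = .inr (x, i) := by
  simp [adj_iff, rel6]

lemma adj_inl_false_iff {v : V6 m} : (G6 m α β).Adj (.inl false) v ↔ ∃ i, v = .inr (y, i) := by
  simp [adj_iff, rel6]

lemma adj_x_iff {i : ZMod m} {v : V6 m} : (G6 m α β).Adj (.inr (x, i)) v ↔
    v = .inl true ∨ v = .inr (y, i) ∨ v = .inr (x0, i) := by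
  rw [adj_iff]; grind [rel6]

lemma adj_y_iff {i : ZMod m} {v : V6 m} : (G6 m α β).Adj (.inr (y, i)) v ↔
    v = .inl false ∨ v = .inr (x, i) ∨ v = .inr (y0, i) := by
  rw [adj_iff]; grind [rel6]

lemma adj_x0_iff {i : ZMod m} {v : V6 m} : (G6 m α β).Adj (.inr (x0, i)) v ↔
    v = .inr (x, i) ∨ v = .inr (y0, i + α) ∨ v = .inr (y0, i + β) := by
  rw [adj_iff]; grind [rel6]

lemma adj_y0_iff {i : ZMod m} {v : V6 m} : (G6 m α β).Adj (.inr (y0, i)) v ↔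
    v = .inr (y, i) ∨ v = .inr (x0, i - α) ∨ v = .inr (x0, i - β) := by
  rw [adj_iff]
  refine ⟨by grind [rel6], ?_⟩
  rintro (rfl | rfl | rfl) <;> simp [rel6]

lemma neighborSet_inl_true :
    (G6 m α β).neighborSet (.inl true) = Set.range fun i => .inr (x, i) := by
  ext; simp [adj_inl_true_iff, eq_comm]

lemma neighborSet_inl_false :
    (G6 m α β).neighborSet (.inl false) = Set.range fun i => .inr (y, i) := by
  ext; simp [adj_inl_false_iff, eq_comm]

lemma ncard_neighborSet_inr (hαβ : α ≠ β) (u : W6) (i : ZMod m) :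
    ((G6 m α β).neighborSet (.inr (u, i))).ncard = 3 := by
  rw [Set.ncard_eq_three]
  cases u
  · refine ⟨_, _, _, ?_, ?_, ?_, Set.ext fun _ => adj_x_iff⟩ <;> simp
  · refine ⟨_, _, _, ?_, ?_, ?_, Set.ext fun _ => adj_y_iff⟩ <;> simp
  · refine ⟨_, _, _, ?_, ?_, ?_, Set.ext fun _ => adj_x0_iff⟩ <;> simp [hαβ]
  · refine ⟨_, _, _, ?_, ?_, ?_, Set.ext fun _ => adj_y0_iff⟩ <;> simp [hαβ]

def side : V6 m → Bool
  | .inl b => b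
  | .inr (x, _) | .inr (y0, _) => false
  | .inr (y, _) | .inr (x0, _) => true

def bicoloring : (G6 m α β).Coloring Bool :=
  Coloring.mk side fun h => by
    rcases adj_iff.mp h with h | h <;>
      obtain ⟨i, rfl, rfl⟩ | ⟨i, rfl, rfl⟩ | ⟨i, rfl, rfl⟩ | ⟨i, rfl, rfl⟩ | ⟨i, rfl, rfl⟩ |
        ⟨i, rfl, rfl⟩ | ⟨i, rfl, rfl⟩ := h <;> simp [side]

/-- Apart from 4-cycles `x₀ y₀ x₀ y₀`, which exist only if `2 (α - β) = 0`, the only candidates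
are `(x,i) (x₀,i) (y₀,i+α) (y,i+α)` and its `β`-analogue, which exist only if `α = 0`, resp.
`β = 0`. -/
lemma eq_of_common_neighbors (hα : α ≠ 0) (hβ : β ≠ 0) (h2 : 2 * (α - β) ≠ 0)
    {a b c d : V6 m} (hac : a ≠ c) (hab : (G6 m α β).Adj a b) (hbc : (G6 m α β).Adj b c)
    (had : (G6 m α β).Adj a d) (hdc : (G6 m α β).Adj d c) : b = d := by
  rw [adj_comm] at hab had
  rcases b with ⟨_ | _⟩ | ⟨_ | _ | _ | _, j⟩ <;> rcases d with ⟨_ | _⟩ | ⟨_ | _ | _ | _, k⟩ <;>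
    simp only [adj_inl_true_iff, adj_inl_false_iff, adj_x_iff, adj_y_iff, adj_x0_iff,
      adj_y0_iff] at hab hbc had hdc <;> grind

lemma egirth_le_six [Nontrivial (ZMod m)] : (G6 m α β).egirth ≤ 6 := by
  have h01 : (0 : ZMod m) ≠ 1 := zero_ne_one
  let w : (G6 m α β).Walk (.inl true) (.inl true) :=
    .cons (adj_inl_true_iff.mpr ⟨0, rfl⟩) <| .cons (adj_x_iff.mpr (.inr (.inl rfl))) <|
    .cons (adj_y_iff.mpr (.inl rfl)) <| .cons (adj_inl_false_iff.mpr ⟨1, rfl⟩) <|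
    .cons (adj_y_iff.mpr (.inr (.inl rfl))) <| .cons (adj_x_iff.mpr (.inl rfl)) .nil
  have hw : w.IsCycle := by simp [w, Walk.isCycle_def, Walk.isTrail_def, h01]
  exact egirth_le_length hw

lemma egirth_eq_six [Nontrivial (ZMod m)] (hα : α ≠ 0) (hβ : β ≠ 0) (h2 : 2 * (α - β) ≠ 0) :
    (G6 m α β).egirth = 6 :=
  egirth_le_six.antisymm <| six_le_egirth_of_coloring_bool bicoloring
    fun _ _ _ _ => eq_of_common_neighbors hα hβ h2

end G6

/-- for `m ≥ 3` and `α, β ∈ ZMod m` with `α ≠ 0`, `β ≠ 0`, `α ≠ β` and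
`2(α - β) ≠ 0`, the graph `(G_6; m)` has girth exactly 6; the vertices `x*`, `y*` have
degree `m` and each of the remaining `4m` vertices has degree 3, so `(G_6; m)` is a
`(3, m; 6)`-graph on `4m + 2` vertices. -/
theorem statement12 (m : ℕ) (hm : 3 ≤ m) (α β : ZMod m)
    (hα : α ≠ 0) (hβ : β ≠ 0) (hαβ : α ≠ β) (h2 : 2 * (α - β) ≠ 0) :
    (G6 m α β).egirth = (6 : ℕ∞) ∧
    ((G6 m α β).neighborSet (Sum.inl true)).ncard = m ∧
    ((G6 m α β).neighborSet (Sum.inl false)).ncard = m ∧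
    (∀ (u : W6) (i : ZMod m), ((G6 m α β).neighborSet (Sum.inr (u, i))).ncard = 3) ∧
    Nat.card (V6 m) = 4 * m + 2 := by
  have : Fact (1 < m) := ⟨by omega⟩
  refine ⟨G6.egirth_eq_six hα hβ h2, ?_, ?_, G6.ncard_neighborSet_inr hαβ, V6.card_eq m⟩
  · rw [G6.neighborSet_inl_true, V6.ncard_range_inr]
  · rw [G6.neighborSet_inl_false, V6.ncard_range_inr]
end

section
/- For all integers t ≥ 2 and m ≥ 1, every simple graph H obtained from (T_{4t}; m) by adding an arbitrary set of extra edges, each of the form {(x, b, i), (y, c, j)} or {(x, b, i), (z, c, j)} where b is a bit string in B'_t of length exactly 2t−2 and c is a bit string in C_t of length exactly 2t−3, is bipartite (i.e. 2-colorable). -/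
/-- `BX t` : bit strings of length at most `2t - 2` that do not have `0^{t-1}` as a
proper prefix (so `0^{t-1}` itself is allowed, but none of its proper extensions is). -/
def BX (t : ℕ) : Type :=
  {l : List Bool // l.length ≤ 2 * t - 2 ∧
    ¬ (List.replicate (t - 1) false <+: l ∧ List.replicate (t - 1) false ≠ l)}

/-- `CY t` : bit strings of length at most `2t - 3` that do not have `0^{t-1}` as a
prefix. -/
def CY (t : ℕ) : Type :=
  {l : List Bool // l.length ≤ 2 * t - 3 ∧ ¬ List.replicate (t - 1) false <+: l}

/-- Vertex set of `(T_{4t}; m)` : the three pinned vertices `x* = Sum.inl 0`,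
`y* = Sum.inl 1`, `z* = Sum.inl 2`, together with `(({x} × B'_t) ∪ ({y,z} × C_t)) × ZMod m`,
where the `x`-part is `Sum.inl`-labelled and the `y`/`z`-parts are `Sum.inr`-labelled with
`y` encoded by `true` and `z` by `false`. -/
def T4Vert (t m : ℕ) : Type := Fin 3 ⊕ ((BX t ⊕ Bool × CY t) × ZMod m)

/-- The edge relation of `(T_{4t}; m)`: each pinned vertex is joined to the corresponding
root; tree edges join each vertex to its children within each of the three trees; and
`(x, 0^{t-1}, i)` is joined to `(y, 0^{t-2}, i)` and to `(z, 0^{t-2}, i)`. -/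
def T4Rel (t m : ℕ) : T4Vert t m → T4Vert t m → Prop := fun a b =>
  (∃ (l : BX t) (i : ZMod m),
      a = Sum.inl 0 ∧ b = Sum.inr (Sum.inl l, i) ∧ l.val = []) ∨
  (∃ (l : CY t) (i : ZMod m),
      a = Sum.inl 1 ∧ b = Sum.inr (Sum.inr (true, l), i) ∧ l.val = []) ∨
  (∃ (l : CY t) (i : ZMod m),
      a = Sum.inl 2 ∧ b = Sum.inr (Sum.inr (false, l), i) ∧ l.val = []) ∨
  (∃ (l l' : BX t) (i : ZMod m) (c : Bool),
      a = Sum.inr (Sum.inl l, i) ∧ b = Sum.inr (Sum.inl l', i) ∧ l'.val = l.val ++ [c]) ∨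
  (∃ (s : Bool) (l l' : CY t) (i : ZMod m) (c : Bool),
      a = Sum.inr (Sum.inr (s, l), i) ∧ b = Sum.inr (Sum.inr (s, l'), i) ∧
      l'.val = l.val ++ [c]) ∨
  (∃ (s : Bool) (l : BX t) (l' : CY t) (i : ZMod m),
      a = Sum.inr (Sum.inl l, i) ∧ b = Sum.inr (Sum.inr (s, l'), i) ∧
      l.val = List.replicate (t - 1) false ∧ l'.val = List.replicate (t - 2) false)

/-- The graph `(T_{4t}; m)`. -/
def T4graph (t m : ℕ) : SimpleGraph (T4Vert t m) := SimpleGraph.fromRel (T4Rel t m)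


lemma step_ne' (p q : ℕ) (h : q = p + 1) :
    ((p : ZMod 2) + 1) ≠ ((q : ZMod 2) + 1) := by
  subst h
  push_cast
  intro hc
  have h01 : (0 : ZMod 2) = 1 := by linear_combination hc
  exact absurd h01 (by decide)

/-- for all integers `t ≥ 2` and `m ≥ 1`, every simple graph obtained from
`(T_{4t}; m)` by adding an arbitrary set of extra edges, each of the form
`{(x, b, i), (y, c, j)}` or `{(x, b, i), (z, c, j)}` where `b ∈ B'_t` has length exactly
`2t - 2` and `c ∈ C_t` has length exactly `2t - 3`, is bipartite. -/
theorem statement16 (t m : ℕ) (ht : 2 ≤ t) (hm : 1 ≤ m)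
    (H : SimpleGraph (T4Vert t m)) (hle : T4graph t m ≤ H)
    (hextra : ∀ a b : T4Vert t m, H.Adj a b → (T4graph t m).Adj a b ∨
      ∃ (s : Bool) (bx : BX t) (cy : CY t) (i j : ZMod m),
        bx.val.length = 2 * t - 2 ∧ cy.val.length = 2 * t - 3 ∧
        ((a = Sum.inr (Sum.inl bx, i) ∧ b = Sum.inr (Sum.inr (s, cy), j)) ∨
         (b = Sum.inr (Sum.inl bx, i) ∧ a = Sum.inr (Sum.inr (s, cy), j)))) :
    H.Colorable 2 := by
  classical
  let f : T4Vert t m → ZMod 2 := fun v =>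
    match v with
    | Sum.inl _ => 0
    | Sum.inr (Sum.inl bx, _) => (bx.val.length : ZMod 2) + 1
    | Sum.inr (Sum.inr (_, cy), _) => (cy.val.length : ZMod 2) + 1
  have key : ∀ u v : T4Vert t m, T4Rel t m u v → f u ≠ f v := by
    intro u v h
    rcases h with ⟨l,i,hu,hv,hl⟩|⟨l,i,hu,hv,hl⟩|⟨l,i,hu,hv,hl⟩|
      ⟨l,l',i,c,hu,hv,hl⟩|⟨s,l,l',i,c,hu,hv,hl⟩|⟨s,l,l',i,hu,hv,hl,hl'⟩
    · subst hu; subst hv; simp [f, hl]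
    · subst hu; subst hv; simp [f, hl]
    · subst hu; subst hv; simp [f, hl]
    · subst hu; subst hv
      have : l'.val.length = l.val.length + 1 := by simp [hl]
      simpa [f, this] using step_ne' l.val.length l'.val.length this
    · subst hu; subst hv
      have : l'.val.length = l.val.length + 1 := by simp [hl]
      simpa [f, this] using step_ne' l.val.length l'.val.length this
    · subst hu; subst hv
      have h1 : l.val.length = t - 1 := by simp [hl]
      have h2 : l'.val.length = t - 2 := by simp [hl']
      have h3 : l.val.length = l'.val.length + 1 := by omega
      simpa [f] using (step_ne' l'.val.length l.val.length h3).symm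
  have hvalid : ∀ a b : T4Vert t m, H.Adj a b → f a ≠ f b := by
    intro a b hab
    rcases hextra a b hab with hg | ⟨s, bx, cy, i, j, hbx, hcy, hcase⟩
    · rw [T4graph, SimpleGraph.fromRel_adj] at hg
      rcases hg.2 with h | h
      · exact key a b h
      · exact (key b a h).symm
    · have hlen : bx.val.length = cy.val.length + 1 := by omega
      rcases hcase with ⟨ha, hb⟩ | ⟨hb, ha⟩
      · subst ha; subst hb
        simpa [f] using (step_ne' cy.val.length bx.val.length hlen).symm
      · subst ha; subst hb
        simpa [f] using step_ne' cy.val.length bx.val.length hlen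
  have hc : H.Coloring (ZMod 2) := SimpleGraph.Coloring.mk f (fun {a b} h => hvalid a b h)
  simpa using hc.colorable
end
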